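/- arXiv:2208.07326 — 5 statements merged into one kernel-verified Lean document; each statement's English description precedes it below -/
import Mathlib

section
/- Let ρ∞ > 0, θ∞ > 0, u∞ < 0, r > 0 and 0 < δ < r²/2. Then there exists a constant C > 0 such that for every Φ ∈ [0, δ] and every ξ = (ξ₁, ξ') ∈ ℝ³ with ξ₁ ≤ −r, setting ζ₁ := −√(ξ₁² − 2Φ), one has: (i) M∞(ζ₁, ξ') ≤ C M∞(ξ); (ii) (|ζ₁ − u∞|/θ∞) M∞(ζ₁, ξ') ≤ C (1 + |ξ₁|) M∞(ξ); (iii) |(ζ₁ − u∞)²/θ∞² − 1/θ∞| · M∞(ζ₁, ξ') ≤ C (1 + |ξ₁|²) M∞(ξ). (Note that −(η₁−u∞)/θ∞ · M∞(η) and ((η₁−u∞)²/θ∞² − 1/θ∞) M∞(η) are the first and second partial derivatives of M∞ in the first velocity variable, so these are the estimates |∂_{ξ₁}M∞(ζ₁,ξ')| ≤ C(1+|ξ₁|)M∞(ξ) and |∂_{ξ₁ξ₁}M∞(ζ₁,ξ')| ≤ C(1+|ξ₁|²)M∞(ξ).) -/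
/-!
For `ξ₁ ≤ 0` the point `ζ₁ = -√(ξ₁² - 2Φ)` satisfies `ξ₁ ≤ ζ₁ ≤ 0` and `ξ₁² - ζ₁² ≤ 2Φ`. As
`u∞ < 0`, the cross term `2u∞(ζ₁ - ξ₁)` is nonpositive, so `(ξ₁ - u∞)² - (ζ₁ - u∞)² ≤ 2Φ` and
`M∞(ζ₁, ξ') ≤ e^{Φ/θ∞} M∞(ξ)`. The polynomial weights in `ζ₁` are controlled by the same
weights in `ξ₁` because `|ζ₁| ≤ |ξ₁|`.
-/

open MeasureTheory Real Set Filter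

/-- The Maxwellian `M∞` with parameters `ρ∞, θ∞, u∞`, where `ξ = (ξ₁, ξ₂, ξ₃)`. -/
noncomputable def Maxwellian (ρ θ u : ℝ) (ξ : ℝ × ℝ × ℝ) : ℝ :=
  ρ * (2 * π * θ) ^ (-(3:ℝ)/2) *
    Real.exp (-(((ξ.1 - u)^2 + ξ.2.1^2 + ξ.2.2^2) / (2 * θ)))

lemma maxwellian_nonneg {ρ θ : ℝ} (hρ : 0 ≤ ρ) (hθ : 0 ≤ θ) (u : ℝ) (ξ : ℝ × ℝ × ℝ) :
    0 ≤ Maxwellian ρ θ u ξ := by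
  unfold Maxwellian
  have := pi_pos
  positivity

lemma maxwellian_fst_eq_exp_mul (ρ θ u ζ ξ₁ ξ₂ ξ₃ : ℝ) :
    Maxwellian ρ θ u (ζ, ξ₂, ξ₃)
      = exp (((ξ₁ - u)^2 - (ζ - u)^2) / (2 * θ)) * Maxwellian ρ θ u (ξ₁, ξ₂, ξ₃) := by
  simp only [Maxwellian]
  rw [mul_left_comm, ← exp_add]
  ring_nf

lemma abs_neg_sqrt_sq_sub_le {Φ : ℝ} (hΦ : 0 ≤ Φ) (x : ℝ) : |-√(x^2 - 2*Φ)| ≤ |x| := by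
  rw [abs_neg, abs_of_nonneg (sqrt_nonneg _), ← sqrt_sq_eq_abs]
  exact sqrt_le_sqrt (by linarith)

lemma sq_sub_sq_neg_sqrt_le {u x Φ : ℝ} (hu : u ≤ 0) (hx : x ≤ 0) (hΦ : 0 ≤ Φ) :
    (x - u)^2 - (-√(x^2 - 2*Φ) - u)^2 ≤ 2*Φ := by
  set ζ := -√(x^2 - 2*Φ) with hζ
  have hζ_sq : x^2 - 2*Φ ≤ ζ^2 := by
    rw [hζ, neg_sq, sq_sqrt']
    exact le_max_left _ _
  have hx_le : x ≤ ζ := by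
    have := abs_neg_sqrt_sq_sub_le hΦ x
    rw [abs_of_nonpos hx] at this
    linarith [neg_abs_le ζ]
  have hcross : 0 ≤ -u * (ζ - x) := mul_nonneg (by linarith) (by linarith)
  nlinarith

lemma maxwellian_neg_sqrt_le {ρ θ u x Φ : ℝ} (hρ : 0 ≤ ρ) (hθ : 0 < θ) (hu : u ≤ 0)
    (hx : x ≤ 0) (hΦ : 0 ≤ Φ) (ξ₂ ξ₃ : ℝ) :
    Maxwellian ρ θ u (-√(x^2 - 2*Φ), ξ₂, ξ₃) ≤ exp (Φ / θ) * Maxwellian ρ θ u (x, ξ₂, ξ₃) := by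
  rw [maxwellian_fst_eq_exp_mul ρ θ u _ x]
  refine mul_le_mul_of_nonneg_right (exp_le_exp.mpr ?_) (maxwellian_nonneg hρ hθ.le u _)
  calc ((x - u)^2 - (-√(x^2 - 2*Φ) - u)^2) / (2 * θ) ≤ 2 * Φ / (2 * θ) := by
        gcongr; exact sq_sub_sq_neg_sqrt_le hu hx hΦ
    _ = Φ / θ := by field_simp

lemma abs_sub_le_mul_one_add_abs {ζ x : ℝ} (h : |ζ| ≤ |x|) (u : ℝ) :
    |ζ - u| ≤ (1 + |u|) * (1 + |x|) := by
  nlinarith [abs_sub ζ u, abs_nonneg u, mul_nonneg (abs_nonneg u) (abs_nonneg x)]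

lemma abs_sub_div_le_mul_one_add_abs {θ ζ x : ℝ} (hθ : 0 < θ) (h : |ζ| ≤ |x|) (u : ℝ) :
    |ζ - u| / θ ≤ (1 + |u|) / θ * (1 + |x|) :=
  calc |ζ - u| / θ ≤ (1 + |u|) * (1 + |x|) / θ := by
        gcongr; exact abs_sub_le_mul_one_add_abs h u
    _ = (1 + |u|) / θ * (1 + |x|) := by ring

lemma sub_sq_le_mul_one_add_sq {ζ x : ℝ} (h : |ζ| ≤ |x|) (u : ℝ) :
    (ζ - u)^2 ≤ 2 * (1 + |u|)^2 * (1 + |x|^2) :=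
  calc (ζ - u)^2 = |ζ - u|^2 := (sq_abs _).symm
    _ ≤ ((1 + |u|) * (1 + |x|))^2 := by gcongr; exact abs_sub_le_mul_one_add_abs h u
    _ ≤ 2 * (1 + |u|)^2 * (1 + |x|^2) := by
      rw [mul_pow, mul_comm 2, mul_assoc]
      gcongr
      nlinarith [sq_nonneg (1 - |x|)]

lemma abs_sub_sq_div_sub_inv_le {θ ζ x : ℝ} (hθ : 0 < θ) (h : |ζ| ≤ |x|) (u : ℝ) :
    |(ζ - u)^2 / θ^2 - 1/θ| ≤ (2 * (1 + |u|)^2 / θ^2 + 1/θ) * (1 + |x|^2) := by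
  have hx : 1 ≤ 1 + |x|^2 := le_add_of_nonneg_right (sq_nonneg _)
  calc |(ζ - u)^2 / θ^2 - 1/θ| ≤ (ζ - u)^2 / θ^2 + 1/θ :=
        (abs_sub _ _).trans_eq <| by
          rw [abs_of_nonneg (by positivity), abs_of_nonneg (by positivity)]
    _ ≤ 2 * (1 + |u|)^2 * (1 + |x|^2) / θ^2 + 1/θ * (1 + |x|^2) := by
        gcongr
        · exact sub_sq_le_mul_one_add_sq h u
        · exact le_mul_of_one_le_right (by positivity) hx
    _ = (2 * (1 + |u|)^2 / θ^2 + 1/θ) * (1 + |x|^2) := by ring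

lemma mul_le_of_le_mul_of_le_mul {a w m n E K : ℝ} (ha₀ : 0 ≤ a) (ha : a ≤ K * w)
    (hm₀ : 0 ≤ m) (hm : m ≤ E * n) : a * m ≤ E * K * w * n :=
  calc a * m ≤ (K * w) * (E * n) := mul_le_mul ha hm hm₀ (ha₀.trans ha)
    _ = E * K * w * n := by ring

theorem shifted_maxwellian_bounds_general
    (ρ θ u r δ : ℝ) (hρ : 0 < ρ) (hθ : 0 < θ) (hu : u < 0) (hr : 0 < r) :
    ∃ C > 0, ∀ Φ ∈ Set.Icc (0:ℝ) δ, ∀ ξ₁ ξ₂ ξ₃ : ℝ, ξ₁ ≤ -r →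
      (Maxwellian ρ θ u (-Real.sqrt (ξ₁^2 - 2*Φ), ξ₂, ξ₃)
          ≤ C * Maxwellian ρ θ u (ξ₁, ξ₂, ξ₃)) ∧
      ((|(-Real.sqrt (ξ₁^2 - 2*Φ)) - u| / θ) *
            Maxwellian ρ θ u (-Real.sqrt (ξ₁^2 - 2*Φ), ξ₂, ξ₃)
          ≤ C * (1 + |ξ₁|) * Maxwellian ρ θ u (ξ₁, ξ₂, ξ₃)) ∧
      (|((-Real.sqrt (ξ₁^2 - 2*Φ)) - u)^2 / θ^2 - 1/θ| *
            Maxwellian ρ θ u (-Real.sqrt (ξ₁^2 - 2*Φ), ξ₂, ξ₃)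
          ≤ C * (1 + |ξ₁|^2) * Maxwellian ρ θ u (ξ₁, ξ₂, ξ₃)) := by
  set K := 1 + (1 + |u|) / θ + (2 * (1 + |u|)^2 / θ^2 + 1/θ)
  have ha : 0 ≤ (1 + |u|) / θ := by positivity
  have hb : 0 ≤ 2 * (1 + |u|)^2 / θ^2 + 1/θ := by positivity
  have hK : 1 ≤ K := by linarith
  refine ⟨exp (δ / θ) * K, by positivity, ?_⟩
  rintro Φ ⟨hΦ, hΦδ⟩ ξ₁ ξ₂ ξ₃ hξ₁
  have hξ₁ : ξ₁ ≤ 0 := by linarith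
  have hζ := abs_neg_sqrt_sq_sub_le hΦ ξ₁
  have hMζ := maxwellian_nonneg hρ.le hθ.le u (-√(ξ₁^2 - 2*Φ), ξ₂, ξ₃)
  have hMξ := maxwellian_nonneg hρ.le hθ.le u (ξ₁, ξ₂, ξ₃)
  have hM : Maxwellian ρ θ u (-√(ξ₁^2 - 2*Φ), ξ₂, ξ₃)
      ≤ exp (δ / θ) * Maxwellian ρ θ u (ξ₁, ξ₂, ξ₃) :=
    (maxwellian_neg_sqrt_le hρ.le hθ hu.le hξ₁ hΦ ξ₂ ξ₃).trans (by gcongr)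
  refine ⟨?_, mul_le_of_le_mul_of_le_mul (by positivity) ?_ hMζ hM,
    mul_le_of_le_mul_of_le_mul (abs_nonneg _) ?_ hMζ hM⟩
  · calc _ ≤ exp (δ / θ) * 1 * Maxwellian ρ θ u (ξ₁, ξ₂, ξ₃) := by rwa [mul_one]
      _ ≤ exp (δ / θ) * K * Maxwellian ρ θ u (ξ₁, ξ₂, ξ₃) := by gcongr
  · exact (abs_sub_div_le_mul_one_add_abs hθ hζ u).trans (by gcongr; linarith)
  · exact (abs_sub_sq_div_sub_inv_le hθ hζ u).trans (by gcongr; linarith)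

/-- pointwise bounds on the shifted Maxwellian at `ζ₁ = -√(ξ₁² - 2Φ)`,
i.e. `M∞(ζ₁,ξ') ≤ C M∞(ξ)`, `|∂_{ξ₁}M∞(ζ₁,ξ')| ≤ C(1+|ξ₁|)M∞(ξ)`, and
`|∂_{ξ₁ξ₁}M∞(ζ₁,ξ')| ≤ C(1+|ξ₁|²)M∞(ξ)`. -/
theorem shifted_maxwellian_bounds
    (ρ θ u r δ : ℝ) (hρ : 0 < ρ) (hθ : 0 < θ) (hu : u < 0) (hr : 0 < r)
    (hδ : 0 < δ) (hδr : δ < r^2 / 2) :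
    ∃ C > 0, ∀ Φ ∈ Set.Icc (0:ℝ) δ, ∀ ξ₁ ξ₂ ξ₃ : ℝ, ξ₁ ≤ -r →
      (Maxwellian ρ θ u (-Real.sqrt (ξ₁^2 - 2*Φ), ξ₂, ξ₃)
          ≤ C * Maxwellian ρ θ u (ξ₁, ξ₂, ξ₃)) ∧
      ((|(-Real.sqrt (ξ₁^2 - 2*Φ)) - u| / θ) *
            Maxwellian ρ θ u (-Real.sqrt (ξ₁^2 - 2*Φ), ξ₂, ξ₃)
          ≤ C * (1 + |ξ₁|) * Maxwellian ρ θ u (ξ₁, ξ₂, ξ₃)) ∧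
      (|((-Real.sqrt (ξ₁^2 - 2*Φ)) - u)^2 / θ^2 - 1/θ| *
            Maxwellian ρ θ u (-Real.sqrt (ξ₁^2 - 2*Φ), ξ₂, ξ₃)
          ≤ C * (1 + |ξ₁|^2) * Maxwellian ρ θ u (ξ₁, ξ₂, ξ₃)) :=
  shifted_maxwellian_bounds_general ρ θ u r δ hρ hθ hu hr
end

section
/- Let ρ∞ > 0, θ∞ > 0, u∞ < 0, r > 0 and 0 < δ < r²/2. Then there exists a constant C > 0 such that for every Φ ∈ [0, δ] and every ξ = (ξ₁, ξ') ∈ ℝ³ with ξ₁ ≤ −r, setting ζ₁ := −√(ξ₁² − 2Φ), one has |M∞(ζ₁, ξ') − M∞(ξ)| ≤ C (1 + |ξ₁|) M∞(ξ) Φ. -/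
open MeasureTheory Real Set Filter

/-!
Write `ζ₁ = -√(ξ₁² - 2Φ)`. Changing only the first velocity component multiplies the Maxwellian
by `exp A` with `A = ((ξ₁ - u)² - (ζ₁ - u)²) / (2θ) = (2Φ + 2u(ζ₁ - ξ₁)) / (2θ)`, and
`ζ₁ - ξ₁ = 2Φ / (√(ξ₁² - 2Φ) - ξ₁) ∈ [0, 2Φ/r]` because `-ξ₁ ≥ r`. Hence `|A| ≤ KΦ ≤ Kδ` with
`K = (1 + 2|u|/r)/θ`, and `|exp A - 1| ≤ |A| exp |A|` gives the bound with `C = K exp (Kδ)`.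
-/

lemma Real.abs_exp_sub_one_le_abs_mul_exp_abs (x : ℝ) : |exp x - 1| ≤ |x| * exp |x| := by
  have h := Complex.norm_exp_sub_sum_le_norm_mul_exp x 1
  simp only [Finset.range_one, Finset.sum_singleton, pow_zero, Nat.factorial_zero, Nat.cast_one,
    div_one, pow_one] at h
  exact_mod_cast h

section NegSqrtShift

variable {x r Φ : ℝ}

lemma abs_neg_sqrt_sub_le (hr : 0 < r) (hx : x ≤ -r) (hΦ : 0 ≤ Φ) (hΦx : 2 * Φ ≤ x ^ 2) :
    |-√(x ^ 2 - 2 * Φ) - x| ≤ 2 * Φ / r := by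
  set s := √(x ^ 2 - 2 * Φ)
  have hs_sq : s ^ 2 = x ^ 2 - 2 * Φ := sq_sqrt (by linarith)
  have hs_le : s ≤ -x := by nlinarith [sqrt_nonneg (x ^ 2 - 2 * Φ)]
  have hprod : (-s - x) * (s - x) = 2 * Φ := by nlinarith
  have hr_le : r ≤ s - x := by linarith [sqrt_nonneg (x ^ 2 - 2 * Φ)]
  rw [abs_of_nonneg (by linarith), le_div_iff₀ hr]
  nlinarith

lemma sq_sub_sq_neg_sqrt (u : ℝ) (hΦx : 2 * Φ ≤ x ^ 2) :
    (x - u) ^ 2 - (-√(x ^ 2 - 2 * Φ) - u) ^ 2 = 2 * Φ + 2 * u * (-√(x ^ 2 - 2 * Φ) - x) := by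
  have hs_sq : √(x ^ 2 - 2 * Φ) ^ 2 = x ^ 2 - 2 * Φ := sq_sqrt (by linarith)
  linear_combination -hs_sq

lemma abs_sq_sub_sq_neg_sqrt_le (u : ℝ) (hr : 0 < r) (hx : x ≤ -r) (hΦ : 0 ≤ Φ)
    (hΦx : 2 * Φ ≤ x ^ 2) :
    |(x - u) ^ 2 - (-√(x ^ 2 - 2 * Φ) - u) ^ 2| ≤ 2 * (1 + 2 * |u| / r) * Φ := by
  rw [sq_sub_sq_neg_sqrt u hΦx]
  have hshift := abs_neg_sqrt_sub_le hr hx hΦ hΦx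
  calc |2 * Φ + 2 * u * (-√(x ^ 2 - 2 * Φ) - x)|
      ≤ |2 * Φ| + |2 * u * (-√(x ^ 2 - 2 * Φ) - x)| := abs_add_le _ _
    _ = 2 * Φ + 2 * |u| * |-√(x ^ 2 - 2 * Φ) - x| := by
        rw [abs_mul, abs_mul, abs_mul, abs_two, abs_of_nonneg hΦ]
    _ ≤ 2 * Φ + 2 * |u| * (2 * Φ / r) := by gcongr
    _ = 2 * (1 + 2 * |u| / r) * Φ := by ring

end NegSqrtShift

section Maxwellian

variable {ρ θ : ℝ}

lemma Maxwellian_pos (hρ : 0 < ρ) (hθ : 0 < θ) (u : ℝ) (ξ : ℝ × ℝ × ℝ) :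
    0 < Maxwellian ρ θ u ξ := by
  unfold Maxwellian
  positivity

lemma Maxwellian_fst_eq_mul_exp (ρ θ u a b ξ₂ ξ₃ : ℝ) :
    Maxwellian ρ θ u (a, ξ₂, ξ₃) =
      Maxwellian ρ θ u (b, ξ₂, ξ₃) * exp (((b - u) ^ 2 - (a - u) ^ 2) / (2 * θ)) := by
  simp only [Maxwellian, mul_assoc, ← exp_add]
  congr 3
  ring

lemma abs_Maxwellian_fst_sub_le (hρ : 0 < ρ) (hθ : 0 < θ) (u a b ξ₂ ξ₃ : ℝ) {ε : ℝ}
    (hε : |((b - u) ^ 2 - (a - u) ^ 2) / (2 * θ)| ≤ ε) :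
    |Maxwellian ρ θ u (a, ξ₂, ξ₃) - Maxwellian ρ θ u (b, ξ₂, ξ₃)|
      ≤ ε * exp ε * Maxwellian ρ θ u (b, ξ₂, ξ₃) := by
  set A := ((b - u) ^ 2 - (a - u) ^ 2) / (2 * θ)
  have hM := Maxwellian_pos hρ hθ u (b, ξ₂, ξ₃)
  have hε₀ : 0 ≤ ε := (abs_nonneg A).trans hε
  rw [Maxwellian_fst_eq_mul_exp ρ θ u a b, ← mul_sub_one, abs_mul, abs_of_pos hM, mul_comm]
  gcongr
  calc |exp A - 1| ≤ |A| * exp |A| := abs_exp_sub_one_le_abs_mul_exp_abs A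
    _ ≤ ε * exp ε := by gcongr

end Maxwellian

theorem shifted_maxwellian_difference_bound_general
    (ρ θ u r δ : ℝ) (hρ : 0 < ρ) (hθ : 0 < θ) (hr : 0 < r)
    (hδr : δ < r^2 / 2) :
    ∃ C > 0, ∀ Φ ∈ Set.Icc (0:ℝ) δ, ∀ ξ₁ ξ₂ ξ₃ : ℝ, ξ₁ ≤ -r →
      |Maxwellian ρ θ u (-Real.sqrt (ξ₁^2 - 2*Φ), ξ₂, ξ₃) - Maxwellian ρ θ u (ξ₁, ξ₂, ξ₃)|
        ≤ C * (1 + |ξ₁|) * Maxwellian ρ θ u (ξ₁, ξ₂, ξ₃) * Φ := by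
  set K := (1 + 2 * |u| / r) / θ
  refine ⟨K * exp (K * δ), by positivity, ?_⟩
  rintro Φ ⟨hΦ, hΦδ⟩ ξ₁ ξ₂ ξ₃ hξ₁
  have hΦξ₁ : 2 * Φ ≤ ξ₁ ^ 2 := by nlinarith
  have hA : |((ξ₁ - u) ^ 2 - (-√(ξ₁ ^ 2 - 2 * Φ) - u) ^ 2) / (2 * θ)| ≤ K * Φ := by
    rw [abs_div, abs_of_pos (by positivity : 0 < 2 * θ), div_le_iff₀ (by positivity)]
    calc _ ≤ 2 * (1 + 2 * |u| / r) * Φ := abs_sq_sub_sq_neg_sqrt_le u hr hξ₁ hΦ hΦξ₁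
      _ = K * Φ * (2 * θ) := by simp only [K]; field_simp
  have hM := Maxwellian_pos hρ hθ u (ξ₁, ξ₂, ξ₃)
  calc _ ≤ K * Φ * exp (K * Φ) * Maxwellian ρ θ u (ξ₁, ξ₂, ξ₃) :=
        abs_Maxwellian_fst_sub_le hρ hθ u _ ξ₁ ξ₂ ξ₃ hA
    _ = K * exp (K * Φ) * 1 * Maxwellian ρ θ u (ξ₁, ξ₂, ξ₃) * Φ := by ring
    _ ≤ K * exp (K * δ) * (1 + |ξ₁|) * Maxwellian ρ θ u (ξ₁, ξ₂, ξ₃) * Φ := by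
        gcongr
        linarith [abs_nonneg ξ₁]

/-- `|M∞(ζ₁,ξ') − M∞(ξ)| ≤ C (1+|ξ₁|) M∞(ξ) Φ` for `ζ₁ = -√(ξ₁² - 2Φ)`. -/
theorem shifted_maxwellian_difference_bound
    (ρ θ u r δ : ℝ) (hρ : 0 < ρ) (hθ : 0 < θ) (hu : u < 0) (hr : 0 < r)
    (hδ : 0 < δ) (hδr : δ < r^2 / 2) :
    ∃ C > 0, ∀ Φ ∈ Set.Icc (0:ℝ) δ, ∀ ξ₁ ξ₂ ξ₃ : ℝ, ξ₁ ≤ -r →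
      |Maxwellian ρ θ u (-Real.sqrt (ξ₁^2 - 2*Φ), ξ₂, ξ₃) - Maxwellian ρ θ u (ξ₁, ξ₂, ξ₃)|
        ≤ C * (1 + |ξ₁|) * Maxwellian ρ θ u (ξ₁, ξ₂, ξ₃) * Φ :=
  shifted_maxwellian_difference_bound_general ρ θ u r δ hρ hθ hr hδr
end

section
/- Let ρ∞ > 0, θ∞ > 0, r > 0, σ > 0 and u∞ < 0 with |u∞| > r + 2σ. Then there exist constants δ₀ > 0 and C > 0 such that: whenever 0 < Φ_b ≤ δ₀ and Φ^s : [0,∞) → ℝ satisfies 0 ≤ Φ^s(x) ≤ Φ_b for all x ≥ 0, the function ξ ↦ F^s(x,ξ) − M∞(ξ)ψ(ξ) is differentiable in ξ₁ for every x ≥ 0, and ( ∫_{ℝ³} |∂_{ξ₁}(F^s − M∞ψ)(x,ξ)|² / M∞(ξ) dξ )^{1/2} ≤ C Φ^s(x) for every x ≥ 0, where C and δ₀ are independent of x, Φ^s and Φ_b. -/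
set_option maxHeartbeats 1000000
open MeasureTheory Real Set Filter


/-- The stationary profile `F^s(x,ξ) = (M∞ψ)(−√(ξ₁²−2Φ^s(x)), ξ')` for `ξ₁ < 0`,
`ξ₁² > 2Φ^s(x)`, and `0` otherwise; `ψ` is a function of `ξ₁` only. -/
noncomputable def statF (ρ θ u : ℝ) (ψ : ℝ → ℝ) (Φs : ℝ → ℝ) (x : ℝ) (ξ : ℝ × ℝ × ℝ) : ℝ :=
  if ξ.1 < 0 ∧ 2 * Φs x < ξ.1^2 then
    Maxwellian ρ θ u (-Real.sqrt (ξ.1^2 - 2 * Φs x), ξ.2) *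
      ψ (-Real.sqrt (ξ.1^2 - 2 * Φs x))
  else 0

private noncomputable def mfun (ρ θ u : ℝ) (s : ℝ) : ℝ :=
  ρ * (2 * π * θ) ^ (-(3:ℝ)/2) * Real.exp (-((s-u)^2/(2*θ)))

private noncomputable def MB (ρ θ u : ℝ) (ψ : ℝ → ℝ) (s : ℝ) : ℝ := mfun ρ θ u s * ψ s

private noncomputable def MB1 (ρ θ u : ℝ) (ψ : ℝ → ℝ) (s : ℝ) : ℝ :=
  mfun ρ θ u s * (-((s-u)/θ) * ψ s + deriv ψ s)

private noncomputable def MB2 (ρ θ u : ℝ) (ψ : ℝ → ℝ) (s : ℝ) : ℝ :=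
  mfun ρ θ u s * (((s-u)^2/θ^2 - 1/θ) * ψ s + (-(2*(s-u)/θ)) * deriv ψ s + deriv (deriv ψ) s)

private lemma mfun_pos (ρ θ u : ℝ) (hρ : 0 < ρ) (hθ : 0 < θ) (s : ℝ) :
    0 < mfun ρ θ u s := by
  have : (0:ℝ) < 2 * π * θ := by positivity
  unfold mfun; positivity

private lemma hasDerivAt_mfun (ρ θ u : ℝ) (hθ : 0 < θ) (s : ℝ) :
    HasDerivAt (mfun ρ θ u) (mfun ρ θ u s * (-((s-u)/θ))) s := by
  have h1 : HasDerivAt (fun s : ℝ => -((s-u)^2/(2*θ))) (-((s-u)/θ)) s := by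
    have h0 : HasDerivAt (fun s : ℝ => s - u) 1 s := (hasDerivAt_id s).sub_const u
    have h2 := ((h0.pow 2).div_const (2*θ)).neg
    refine h2.congr_deriv ?_
    field_simp; ring
  have := h1.exp.const_mul (ρ * (2 * π * θ) ^ (-(3:ℝ)/2))
  unfold mfun
  refine this.congr_deriv ?_
  ring

private lemma hasDerivAt_MB (ρ θ u : ℝ) (hθ : 0 < θ) (ψ : ℝ → ℝ) (hψ : Differentiable ℝ ψ)
    (s : ℝ) : HasDerivAt (MB ρ θ u ψ) (MB1 ρ θ u ψ s) s := by
  have := (hasDerivAt_mfun ρ θ u hθ s).mul (hψ s).hasDerivAt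
  refine this.congr_deriv ?_
  simp only [MB1]; ring

private lemma hasDerivAt_MB1 (ρ θ u : ℝ) (hθ : 0 < θ) (ψ : ℝ → ℝ) (hψ : ContDiff ℝ (⊤ : ℕ∞) ψ)
    (s : ℝ) : HasDerivAt (MB1 ρ θ u ψ) (MB2 ρ θ u ψ s) s := by
  have hψd : Differentiable ℝ ψ := hψ.differentiable (by simp)
  have hψ' : ContDiff ℝ ((⊤:ℕ∞):WithTop ℕ∞) ψ := hψ.of_le (by simp)
  have hψ1d : Differentiable ℝ (deriv ψ) :=
    (contDiff_infty_iff_deriv.mp hψ').2.differentiable (by simp)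
  have hlin : HasDerivAt (fun s : ℝ => -((s-u)/θ)) (-(1/θ)) s := by
    have h0 : HasDerivAt (fun s : ℝ => s - u) 1 s := (hasDerivAt_id s).sub_const u
    have := (h0.div_const θ).neg
    refine this.congr_deriv ?_
    ring
  have hv : HasDerivAt (fun s => -((s-u)/θ) * ψ s + deriv ψ s)
      (-(1/θ) * ψ s + -((s-u)/θ) * deriv ψ s + deriv (deriv ψ) s) s := by
    have := (hlin.mul (hψd s).hasDerivAt).add (hψ1d s).hasDerivAt
    refine this.congr_deriv ?_
    ring
  have := (hasDerivAt_mfun ρ θ u hθ s).mul hv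
  refine this.congr_deriv ?_
  simp only [MB2, MB1]; ring

private lemma aux_bdd {f : ℝ → ℝ} (hf : Continuous f) (a b : ℝ)
    (h0 : ∀ t, t < a → f t = 0) (h1 : ∀ t, b < t → f t = 0) :
    ∃ A, 0 ≤ A ∧ ∀ t, |f t| ≤ A := by
  obtain ⟨C, hC⟩ := isCompact_Icc.exists_bound_of_continuousOn
    (hf.continuousOn : ContinuousOn f (Icc a b))
  refine ⟨max C 0, le_max_right _ _, fun t => ?_⟩
  rcases lt_or_ge t a with h | h
  · simp [h0 t h]
  rcases le_or_gt t b with h' | h'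
  · exact le_trans (by simpa using hC t ⟨h, h'⟩) (le_max_left _ _)
  · simp [h1 t h']

private lemma aux_poly_exp (θ a₀ a₁ a₂ x : ℝ) (hθ : 0 < θ) (h0 : 0 ≤ a₀) (h1 : 0 ≤ a₁)
    (h2 : 0 ≤ a₂) :
    (a₀ + a₁ * |x| + a₂ * x^2) * exp (-(x^2/(2*θ))) ≤
      (a₀ + a₁*(1+16*θ) + a₂*(16*θ)) * exp (-(7/16)*(x^2/θ)) := by
  have hE : x^2/(16*θ) + 1 ≤ exp (x^2/(16*θ)) := add_one_le_exp _
  have hE' : x^2 + 16*θ ≤ 16*θ * exp (x^2/(16*θ)) := by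
    have := mul_le_mul_of_nonneg_left hE (by positivity : (0:ℝ) ≤ 16*θ)
    have heq : 16*θ*(x^2/(16*θ) + 1) = x^2 + 16*θ := by field_simp
    linarith [heq ▸ this]
  have hE1 : (1:ℝ) ≤ exp (x^2/(16*θ)) := one_le_exp (by positivity)
  have key : a₀ + a₁ * |x| + a₂ * x^2 ≤
      (a₀ + a₁*(1+16*θ) + a₂*(16*θ)) * exp (x^2/(16*θ)) := by
    nlinarith [mul_nonneg h0 (by linarith : (0:ℝ) ≤ exp (x^2/(16*θ)) - 1),
      mul_nonneg h1 (sq_nonneg (|x| - 1)), sq_abs x,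
      mul_nonneg h1 (by linarith : (0:ℝ) ≤ 16*θ*exp (x^2/(16*θ)) - x^2 - 16*θ),
      mul_nonneg h1 (by linarith : (0:ℝ) ≤ exp (x^2/(16*θ)) - 1),
      mul_nonneg h2 (by linarith : (0:ℝ) ≤ 16*θ*exp (x^2/(16*θ)) - x^2 - 16*θ),
      mul_nonneg (mul_nonneg h1 hθ.le) (by linarith : (0:ℝ) ≤ exp (x^2/(16*θ)) - 1)]
  have hmul : exp (x^2/(16*θ)) * exp (-(x^2/(2*θ))) = exp (-(7/16)*(x^2/θ)) := by
    rw [← exp_add]; congr 1; field_simp; ring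
  calc (a₀ + a₁ * |x| + a₂ * x^2) * exp (-(x^2/(2*θ)))
      ≤ ((a₀ + a₁*(1+16*θ) + a₂*(16*θ)) * exp (x^2/(16*θ))) * exp (-(x^2/(2*θ))) :=
        mul_le_mul_of_nonneg_right key (exp_pos _).le
    _ = (a₀ + a₁*(1+16*θ) + a₂*(16*θ)) * exp (-(7/16)*(x^2/θ)) := by rw [mul_assoc, hmul]

private lemma aux_shift (θ u s t : ℝ) (hθ : 0 < θ) (h1 : s ≤ t) (h2 : t ≤ s + 1) :
    exp (-(7/16)*((t-u)^2/θ)) ≤ exp (49/(16*θ)) * exp (-(3/8)*((s-u)^2/θ)) := by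
  rw [← exp_add, exp_le_exp]
  have hkey : 6*(s-u)^2 - 7*(t-u)^2 ≤ 49 := by
    nlinarith [sq_nonneg (|s-u| - 7), sq_abs (s-u),
      mul_nonneg (by linarith [neg_abs_le (s-u)] : (0:ℝ) ≤ |s-u| + (s-u))
        (by linarith : (0:ℝ) ≤ t-s),
      mul_nonneg (abs_nonneg (s-u)) (by linarith : (0:ℝ) ≤ 1-(t-s)), sq_nonneg (t-s)]
  rw [show -(7/16)*((t-u)^2/θ) = (-7*(t-u)^2)/(16*θ) by ring,
    show 49/(16*θ) + -(3/8)*((s-u)^2/θ) = (49 - 6*(s-u)^2)/(16*θ) by ring]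
  exact div_le_div_of_nonneg_right (by linarith) (by positivity) |>.trans_eq rfl
-- bound |MB1| ≤ c₃·(A₁ + (1/θ)(1+16θ))·exp(-(7/16)(x²/θ))
private lemma MB1_bound (ρ θ u : ℝ) (hρ : 0 < ρ) (hθ : 0 < θ) (ψ : ℝ → ℝ)
    (hψ0 : ∀ s, 0 ≤ ψ s) (hψ1 : ∀ s, ψ s ≤ 1) (A₁ : ℝ) (hA₁0 : 0 ≤ A₁)
    (hA₁ : ∀ t, |deriv ψ t| ≤ A₁) (t : ℝ) :
    |MB1 ρ θ u ψ t| ≤ (ρ * (2 * π * θ) ^ (-(3:ℝ)/2)) * (A₁ + (1/θ)*(1+16*θ) + 0*(16*θ))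
      * exp (-(7/16)*((t-u)^2/θ)) := by
  set c₃ := ρ * (2 * π * θ) ^ (-(3:ℝ)/2) with hc₃def
  have h2πθ : (0:ℝ) < 2*π*θ := by positivity
  have hc₃ : 0 < c₃ := by rw [hc₃def]; positivity
  have hψt : |ψ t| ≤ 1 := abs_le.mpr ⟨by linarith [hψ0 t], hψ1 t⟩
  have hstep : |(-((t-u)/θ) * ψ t + deriv ψ t)| ≤ A₁ + (1/θ)*|t-u| + 0*(t-u)^2 := by
    have h1 : |(-((t-u)/θ)) * ψ t| ≤ (1/θ)*|t-u| := by
      rw [abs_mul, abs_neg, abs_div, abs_of_pos hθ]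
      calc |t-u|/θ * |ψ t| ≤ |t-u|/θ * 1 :=
            mul_le_mul_of_nonneg_left hψt (by positivity)
        _ = (1/θ)*|t-u| := by ring
    calc |(-((t-u)/θ) * ψ t + deriv ψ t)| ≤ |(-((t-u)/θ)) * ψ t| + |deriv ψ t| := abs_add_le _ _
      _ ≤ A₁ + (1/θ)*|t-u| + 0*(t-u)^2 := by have := hA₁ t; linarith
  have hm : |mfun ρ θ u t| = c₃ * exp (-((t-u)^2/(2*θ))) := by
    rw [abs_of_pos]
    · rfl
    · have : (0:ℝ) < 2*π*θ := by positivity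
      unfold mfun; positivity
  calc |MB1 ρ θ u ψ t| = |mfun ρ θ u t| * |(-((t-u)/θ) * ψ t + deriv ψ t)| := abs_mul _ _
    _ ≤ (c₃ * exp (-((t-u)^2/(2*θ)))) * (A₁ + (1/θ)*|t-u| + 0*(t-u)^2) := by
        rw [hm]
        exact mul_le_mul_of_nonneg_left hstep (by positivity)
    _ = c₃ * ((A₁ + (1/θ)*|t-u| + 0*(t-u)^2) * exp (-((t-u)^2/(2*θ)))) := by ring
    _ ≤ c₃ * ((A₁ + (1/θ)*(1+16*θ) + 0*(16*θ)) * exp (-(7/16)*((t-u)^2/θ))) :=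
        mul_le_mul_of_nonneg_left
          (aux_poly_exp θ A₁ (1/θ) 0 (t-u) hθ hA₁0 (by positivity) le_rfl) hc₃.le
    _ = c₃ * (A₁ + (1/θ)*(1+16*θ) + 0*(16*θ)) * exp (-(7/16)*((t-u)^2/θ)) := by ring

private lemma MB2_bound (ρ θ u : ℝ) (hρ : 0 < ρ) (hθ : 0 < θ) (ψ : ℝ → ℝ)
    (hψ0 : ∀ s, 0 ≤ ψ s) (hψ1 : ∀ s, ψ s ≤ 1) (A₁ A₂ : ℝ) (hA₁0 : 0 ≤ A₁) (hA₂0 : 0 ≤ A₂)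
    (hA₁ : ∀ t, |deriv ψ t| ≤ A₁) (hA₂ : ∀ t, |deriv (deriv ψ) t| ≤ A₂) (t : ℝ) :
    |MB2 ρ θ u ψ t| ≤ (ρ * (2 * π * θ) ^ (-(3:ℝ)/2)) *
      ((1/θ + A₂) + (2*A₁/θ)*(1+16*θ) + (1/θ^2)*(16*θ)) * exp (-(7/16)*((t-u)^2/θ)) := by
  set c₃ := ρ * (2 * π * θ) ^ (-(3:ℝ)/2) with hc₃def
  have h2πθ : (0:ℝ) < 2*π*θ := by positivity
  have hc₃ : 0 < c₃ := by rw [hc₃def]; positivity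
  have hψt : |ψ t| ≤ 1 := abs_le.mpr ⟨by linarith [hψ0 t], hψ1 t⟩
  have hstep : |(((t-u)^2/θ^2 - 1/θ) * ψ t + (-(2*(t-u)/θ)) * deriv ψ t + deriv (deriv ψ) t)|
      ≤ (1/θ + A₂) + (2*A₁/θ)*|t-u| + (1/θ^2)*(t-u)^2 := by
    have h1 : |((t-u)^2/θ^2 - 1/θ) * ψ t| ≤ (t-u)^2/θ^2 + 1/θ := by
      rw [abs_mul]
      have hb : |(t-u)^2/θ^2 - 1/θ| ≤ (t-u)^2/θ^2 + 1/θ := by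
        have e1 : (0:ℝ) ≤ (t-u)^2/θ^2 := by positivity
        have e2 : (0:ℝ) ≤ 1/θ := by positivity
        rw [abs_le]; constructor <;> linarith
      calc |(t-u)^2/θ^2 - 1/θ| * |ψ t| ≤ ((t-u)^2/θ^2 + 1/θ) * 1 := by
            apply mul_le_mul hb hψt (abs_nonneg _) (by positivity)
        _ = (t-u)^2/θ^2 + 1/θ := by ring
    have h2 : |(-(2*(t-u)/θ)) * deriv ψ t| ≤ (2*A₁/θ)*|t-u| := by
      rw [abs_mul, abs_neg]
      have : |2*(t-u)/θ| = 2*|t-u|/θ := by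
        rw [abs_div, abs_of_pos hθ, abs_mul]; norm_num
      rw [this]
      calc 2*|t-u|/θ * |deriv ψ t| ≤ 2*|t-u|/θ * A₁ :=
            mul_le_mul_of_nonneg_left (hA₁ t) (by positivity)
        _ = (2*A₁/θ)*|t-u| := by ring
    calc |(((t-u)^2/θ^2 - 1/θ) * ψ t + (-(2*(t-u)/θ)) * deriv ψ t + deriv (deriv ψ) t)|
        ≤ |((t-u)^2/θ^2 - 1/θ) * ψ t + (-(2*(t-u)/θ)) * deriv ψ t| + |deriv (deriv ψ) t| :=
          abs_add_le _ _
      _ ≤ |((t-u)^2/θ^2 - 1/θ) * ψ t| + |(-(2*(t-u)/θ)) * deriv ψ t| + |deriv (deriv ψ) t| :=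
          by linarith [abs_add_le (((t-u)^2/θ^2 - 1/θ) * ψ t) ((-(2*(t-u)/θ)) * deriv ψ t)]
      _ ≤ (1/θ + A₂) + (2*A₁/θ)*|t-u| + (1/θ^2)*(t-u)^2 := by
          have := hA₂ t
          have e3 : (t-u)^2/θ^2 = (1/θ^2)*(t-u)^2 := by ring
          linarith [e3 ▸ h1]
  have hm : |mfun ρ θ u t| = c₃ * exp (-((t-u)^2/(2*θ))) := by
    rw [abs_of_pos]
    · rfl
    · have : (0:ℝ) < 2*π*θ := by positivity
      unfold mfun; positivity
  calc |MB2 ρ θ u ψ t| = |mfun ρ θ u t| * |_| := abs_mul _ _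
    _ ≤ (c₃ * exp (-((t-u)^2/(2*θ)))) *
        ((1/θ + A₂) + (2*A₁/θ)*|t-u| + (1/θ^2)*(t-u)^2) := by
        rw [hm]; exact mul_le_mul_of_nonneg_left hstep (by positivity)
    _ = c₃ * (((1/θ + A₂) + (2*A₁/θ)*|t-u| + (1/θ^2)*(t-u)^2) * exp (-((t-u)^2/(2*θ)))) := by
        ring
    _ ≤ c₃ * (((1/θ + A₂) + (2*A₁/θ)*(1+16*θ) + (1/θ^2)*(16*θ)) * exp (-(7/16)*((t-u)^2/θ))) :=
        mul_le_mul_of_nonneg_left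
          (aux_poly_exp θ (1/θ + A₂) (2*A₁/θ) (1/θ^2) (t-u) hθ (by positivity) (by positivity)
            (by positivity)) hc₃.le
    _ = c₃ * ((1/θ + A₂) + (2*A₁/θ)*(1+16*θ) + (1/θ^2)*(16*θ)) * exp (-(7/16)*((t-u)^2/θ)) := by
        ring
private noncomputable def qfun (ρ θ u : ℝ) (ψ : ℝ → ℝ) (Φ : ℝ) (s : ℝ) : ℝ :=
  if s < 0 ∧ 2*Φ < s^2 then MB ρ θ u ψ (-Real.sqrt (s^2 - 2*Φ)) else 0

private noncomputable def gfun (ρ θ u : ℝ) (ψ : ℝ → ℝ) (Φ : ℝ) (s : ℝ) : ℝ :=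
  qfun ρ θ u ψ Φ s - MB ρ θ u ψ s

private lemma gfun_zero (ρ θ r u : ℝ) (ψ : ℝ → ℝ) (hψa : ∀ s, -r ≤ s → ψ s = 0)
    (Φ : ℝ) (hΦ0 : 0 ≤ Φ) (t : ℝ) (ht : -r ≤ t) : gfun ρ θ u ψ Φ t = 0 := by
  have hMBt : MB ρ θ u ψ t = 0 := by simp [MB, hψa t ht]
  have hq : qfun ρ θ u ψ Φ t = 0 := by
    unfold qfun
    split_ifs with hc
    · have h2 : Real.sqrt (t^2 - 2*Φ) ≤ -t := by
        have h3 : Real.sqrt (t^2 - 2*Φ) ≤ Real.sqrt (t^2) :=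
          Real.sqrt_le_sqrt (by linarith)
        rw [Real.sqrt_sq_eq_abs, abs_of_neg hc.1] at h3
        exact h3
      have hge : -r ≤ -Real.sqrt (t^2 - 2*Φ) := by linarith
      simp [MB, hψa _ hge]
    · rfl
  simp [gfun, hq, hMBt]

private lemma gfun_hasDerivAt (ρ θ r u : ℝ) (hθ : 0 < θ) (hr : 0 < r) (ψ : ℝ → ℝ)
    (hψ : Differentiable ℝ ψ) (Φ : ℝ) (hΦ0 : 0 ≤ Φ) (hΦ1 : 2*Φ ≤ r^2/8)
    (s : ℝ) (hs : s ≤ -r) :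
    HasDerivAt (gfun ρ θ u ψ Φ)
      (MB1 ρ θ u ψ (-Real.sqrt (s^2 - 2*Φ)) * (-s/Real.sqrt (s^2 - 2*Φ)) - MB1 ρ θ u ψ s) s := by
  have hs2 : r^2 ≤ s^2 := by nlinarith
  have hpos : 0 < s^2 - 2*Φ := by nlinarith
  have hsqrt_pos : 0 < Real.sqrt (s^2 - 2*Φ) := Real.sqrt_pos.mpr hpos
  have hR : HasDerivAt (fun t : ℝ => t^2 - 2*Φ) (2*s) s := by
    have := (hasDerivAt_pow 2 s).sub_const (2*Φ)
    simpa using this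
  have hsq := (Real.hasDerivAt_sqrt hpos.ne').comp s hR
  have hneg := hsq.neg
  have hcomp := (hasDerivAt_MB ρ θ u hθ ψ hψ (-Real.sqrt (s^2 - 2*Φ))).comp s hneg
  have hφ := hcomp.sub (hasDerivAt_MB ρ θ u hθ ψ hψ s)
  have hev : (gfun ρ θ u ψ Φ) =ᶠ[nhds s]
      fun t => MB ρ θ u ψ (-Real.sqrt (t^2 - 2*Φ)) - MB ρ θ u ψ t := by
    filter_upwards [Iio_mem_nhds (show s < -r/2 by linarith)] with t ht
    have hc : t < 0 ∧ 2*Φ < t^2 := by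
      constructor
      · have : t < -r/2 := ht
        linarith
      · have : t < -r/2 := ht
        nlinarith
    simp [gfun, qfun, hc]
  have hder := hφ.congr_of_eventuallyEq hev
  refine hder.congr_deriv ?_
  field_simp
private lemma gfun_deriv_bound (ρ θ r u : ℝ) (hθ : 0 < θ) (hr : 0 < r)
    (ψ : ℝ → ℝ) (hψ : ContDiff ℝ (⊤ : ℕ∞) ψ) (hψa : ∀ s, -r ≤ s → ψ s = 0)
    (K₁ K₂ : ℝ) (hK₁0 : 0 ≤ K₁) (hK₂0 : 0 ≤ K₂)
    (hK₁ : ∀ t, |MB1 ρ θ u ψ t| ≤ K₁ * exp (-(7/16)*((t-u)^2/θ)))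
    (hK₂ : ∀ t, |MB2 ρ θ u ψ t| ≤ K₂ * exp (-(7/16)*((t-u)^2/θ)))
    (Φ : ℝ) (hΦ0 : 0 ≤ Φ) (hΦ1 : 2*Φ ≤ r^2/8) (hΦ2 : 2*Φ ≤ r) (s : ℝ) :
    |deriv (gfun ρ θ u ψ Φ) s| ≤
      exp (49/(16*θ)) * (2*K₂/r + 4*K₁/r^2) * Φ * exp (-(3/8)*((s-u)^2/θ)) := by
  have hψd : Differentiable ℝ ψ := hψ.differentiable (by simp)
  have hRHS0 : 0 ≤ exp (49/(16*θ)) * (2*K₂/r + 4*K₁/r^2) * Φ * exp (-(3/8)*((s-u)^2/θ)) := by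
    have h24 : 0 ≤ 2*K₂/r + 4*K₁/r^2 :=
      add_nonneg (div_nonneg (by linarith) hr.le) (div_nonneg (by linarith) (by positivity))
    exact mul_nonneg (mul_nonneg (mul_nonneg (exp_pos _).le h24) hΦ0) (exp_pos _).le
  rcases lt_or_ge (-r) s with hs | hs
  · have hev : gfun ρ θ u ψ Φ =ᶠ[nhds s] (fun _ => (0:ℝ)) := by
      filter_upwards [Ioi_mem_nhds hs] with t ht
      exact gfun_zero ρ θ r u ψ hψa Φ hΦ0 t (le_of_lt ht)
    rw [hev.deriv_eq, deriv_const]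
    simpa using hRHS0
  · -- main estimate
    have hs2 : r^2 ≤ s^2 := by nlinarith
    have hpos : 0 < s^2 - 2*Φ := by nlinarith
    set R := Real.sqrt (s^2 - 2*Φ) with hRdef
    have hRpos : 0 < R := Real.sqrt_pos.mpr hpos
    have hR2 : R^2 = s^2 - 2*Φ := Real.sq_sqrt hpos.le
    have hRle : R ≤ -s := by
      have h3 : R ≤ Real.sqrt (s^2) := Real.sqrt_le_sqrt (by linarith)
      rwa [Real.sqrt_sq_eq_abs, abs_of_neg (by linarith : s < 0)] at h3
    have hRge : r/2 ≤ R := by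
      rw [hRdef]
      rw [show r/2 = Real.sqrt ((r/2)^2) from (Real.sqrt_sq (by positivity)).symm]
      exact Real.sqrt_le_sqrt (by nlinarith)
    have hden : r ≤ (-s) + R := by linarith
    have hsub0 : 0 ≤ (-s) - R := by linarith
    have hprod : ((-s) - R) * ((-s) + R) = 2*Φ := by linear_combination (-1 : ℝ) * hR2
    have hgap : (-s) - R ≤ 2*Φ/r := by
      rw [le_div_iff₀ hr]
      calc ((-s) - R) * r ≤ ((-s) - R) * ((-s) + R) := by
            exact mul_le_mul_of_nonneg_left hden hsub0
        _ = 2*Φ := hprod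
    have hgap1 : (-s) - R ≤ 1 := by
      have : 2*Φ/r ≤ 1 := by rw [div_le_one hr]; linarith
      linarith
    have hD1 : 1 ≤ (-s)/R := (one_le_div hRpos).mpr hRle
    have hDgap : (-s)/R - 1 ≤ 4*Φ/r^2 := by
      have e1 : (-s)/R - 1 = ((-s) - R)/R := by field_simp
      have e2 : ((-s) - R)/R ≤ (2*Φ/r)/(r/2) :=
        div_le_div₀ (by positivity) hgap (by positivity) hRge
      have e3 : (2*Φ/r)/(r/2) = 4*Φ/r^2 := by field_simp; ring
      rw [e1]; rw [e3] at e2; exact e2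
    set η := -R with hηdef
    have hηs : s ≤ η := by rw [hηdef]; linarith
    have hη1 : η ≤ s + 1 := by rw [hηdef]; linarith
    -- MVT bound on |MB1 η - MB1 s|
    set E49 := exp (49/(16*θ)) with hE49def
    set ws := exp (-(3/8)*((s-u)^2/θ)) with hwsdef
    have hws0 : 0 < ws := exp_pos _
    have hMVT : |MB1 ρ θ u ψ η - MB1 ρ θ u ψ s| ≤ (K₂ * E49 * ws) * (η - s) := by
      have hbd : ∀ t ∈ Icc s (s+1), ‖deriv (MB1 ρ θ u ψ) t‖ ≤ K₂ * E49 * ws := by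
        intro t ht
        rw [(hasDerivAt_MB1 ρ θ u hθ ψ hψ t).deriv, Real.norm_eq_abs]
        calc |MB2 ρ θ u ψ t| ≤ K₂ * exp (-(7/16)*((t-u)^2/θ)) := hK₂ t
          _ ≤ K₂ * (E49 * ws) := mul_le_mul_of_nonneg_left
              (aux_shift θ u s t hθ ht.1 ht.2) hK₂0
          _ = K₂ * E49 * ws := by ring
      have := Convex.norm_image_sub_le_of_norm_deriv_le
        (fun t _ => (hasDerivAt_MB1 ρ θ u hθ ψ hψ t).differentiableAt)
        hbd (convex_Icc s (s+1)) (⟨le_refl s, by linarith⟩ : s ∈ Icc s (s+1))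
        (⟨hηs, hη1⟩ : η ∈ Icc s (s+1))
      rw [Real.norm_eq_abs, Real.norm_eq_abs, abs_of_nonneg (by linarith : (0:ℝ) ≤ η - s)] at this
      exact this
    have hMB1η : |MB1 ρ θ u ψ η| ≤ K₁ * E49 * ws := by
      calc |MB1 ρ θ u ψ η| ≤ K₁ * exp (-(7/16)*((η-u)^2/θ)) := hK₁ η
        _ ≤ K₁ * (E49 * ws) := mul_le_mul_of_nonneg_left (aux_shift θ u s η hθ hηs hη1) hK₁0
        _ = K₁ * E49 * ws := by ring
    have hder := (gfun_hasDerivAt ρ θ r u hθ hr ψ hψd Φ hΦ0 hΦ1 s hs).deriv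
    rw [hder]
    have e0 : MB1 ρ θ u ψ (-R) * (-s/R) - MB1 ρ θ u ψ s =
        (MB1 ρ θ u ψ η - MB1 ρ θ u ψ s) + MB1 ρ θ u ψ η * ((-s)/R - 1) := by
      rw [hηdef]; ring
    rw [e0]
    have hηgap : η - s ≤ 2*Φ/r := by rw [hηdef]; linarith
    calc |(MB1 ρ θ u ψ η - MB1 ρ θ u ψ s) + MB1 ρ θ u ψ η * ((-s)/R - 1)|
        ≤ |MB1 ρ θ u ψ η - MB1 ρ θ u ψ s| + |MB1 ρ θ u ψ η * ((-s)/R - 1)| := abs_add_le _ _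
      _ = |MB1 ρ θ u ψ η - MB1 ρ θ u ψ s| + |MB1 ρ θ u ψ η| * ((-s)/R - 1) := by
          rw [abs_mul, abs_of_nonneg (by linarith : (0:ℝ) ≤ (-s)/R - 1)]
      _ ≤ (K₂ * E49 * ws) * (2*Φ/r) + (K₁ * E49 * ws) * (4*Φ/r^2) := by
          have hE490 : (0:ℝ) < E49 := by rw [hE49def]; exact exp_pos _
          have hG0 : 0 ≤ K₂ * E49 * ws := mul_nonneg (mul_nonneg hK₂0 hE490.le) hws0.le
          have hG1 : 0 ≤ K₁ * E49 * ws := mul_nonneg (mul_nonneg hK₁0 hE490.le) hws0.le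
          have t1 := hMVT.trans (mul_le_mul_of_nonneg_left hηgap hG0)
          have t2 : |MB1 ρ θ u ψ η| * ((-s)/R - 1) ≤ (K₁*E49*ws) * (4*Φ/r^2) :=
            mul_le_mul hMB1η hDgap (by linarith) hG1
          linarith
      _ = E49 * (2*K₂/r + 4*K₁/r^2) * Φ * ws := by ring

/-- weighted `L²_ξ` bound `‖∂_{ξ₁}(F^s − M∞ψ)/M∞^{1/2}(x,·)‖_{L²_ξ} ≤ C Φ^s(x)`. -/
theorem stationary_difference_deriv_bound
    (ρ θ r σ u : ℝ) (hρ : 0 < ρ) (hθ : 0 < θ) (hr : 0 < r) (hσ : 0 < σ)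
    (hu : u < 0) (hu2 : r + 2*σ < |u|)
    (ψ : ℝ → ℝ) (hψ : ContDiff ℝ (⊤ : ℕ∞) ψ) (hψ0 : ∀ s, 0 ≤ ψ s) (hψ1 : ∀ s, ψ s ≤ 1)
    (hψa : ∀ s, -r ≤ s → ψ s = 0) (hψb : ∀ s, s ≤ -r - σ → ψ s = 1) :
    ∃ δ₀ > 0, ∃ C > 0, ∀ (Φb : ℝ) (Φs : ℝ → ℝ),
      0 < Φb → Φb ≤ δ₀ → (∀ x ≥ (0:ℝ), 0 ≤ Φs x ∧ Φs x ≤ Φb) →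
      ∀ x ≥ (0:ℝ),
        (∀ ξ₁ ξ₂ ξ₃ : ℝ, DifferentiableAt ℝ
          (fun s => statF ρ θ u ψ Φs x (s, ξ₂, ξ₃) -
            Maxwellian ρ θ u (s, ξ₂, ξ₃) * ψ s) ξ₁) ∧
        Real.sqrt (∫ ξ : ℝ × ℝ × ℝ,
            (deriv (fun s => statF ρ θ u ψ Φs x (s, ξ.2) -
              Maxwellian ρ θ u (s, ξ.2) * ψ s) ξ.1)^2 / Maxwellian ρ θ u ξ)
          ≤ C * Φs x := by
  have h2πθ : (0:ℝ) < 2*π*θ := by positivity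
  set c₃ : ℝ := ρ * (2 * π * θ) ^ (-(3:ℝ)/2) with hc₃def
  have hc₃ : 0 < c₃ := by rw [hc₃def]; positivity
  -- smoothness facts for ψ
  have hψd : Differentiable ℝ ψ := hψ.differentiable (by simp)
  have hψ' : ContDiff ℝ ((⊤:ℕ∞):WithTop ℕ∞) ψ := hψ.of_le (by simp)
  have hψ1cd := (contDiff_infty_iff_deriv.mp hψ').2
  have hψ1cont : Continuous (deriv ψ) :=
    (hψ1cd.differentiable (by simp)).continuous
  have hψ2cont : Continuous (deriv (deriv ψ)) :=
    ((contDiff_infty_iff_deriv.mp hψ1cd).2.differentiable (by simp)).continuous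
  -- the derivatives of ψ vanish outside [-r-σ, -r]
  have hd1a : ∀ t, -r < t → deriv ψ t = 0 := by
    intro t ht
    have hev : ψ =ᶠ[nhds t] fun _ => (0:ℝ) := by
      filter_upwards [Ioi_mem_nhds ht] with y hy
      exact hψa y hy.le
    rw [hev.deriv_eq]; exact deriv_const _ _
  have hd1b : ∀ t, t < -r - σ → deriv ψ t = 0 := by
    intro t ht
    have hev : ψ =ᶠ[nhds t] fun _ => (1:ℝ) := by
      filter_upwards [Iio_mem_nhds ht] with y hy
      exact hψb y hy.le
    rw [hev.deriv_eq]; exact deriv_const _ _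
  have hd2a : ∀ t, -r < t → deriv (deriv ψ) t = 0 := by
    intro t ht
    have hev : deriv ψ =ᶠ[nhds t] fun _ => (0:ℝ) := by
      filter_upwards [Ioi_mem_nhds ht] with y hy
      exact hd1a y hy
    rw [hev.deriv_eq]; exact deriv_const _ _
  have hd2b : ∀ t, t < -r - σ → deriv (deriv ψ) t = 0 := by
    intro t ht
    have hev : deriv ψ =ᶠ[nhds t] fun _ => (0:ℝ) := by
      filter_upwards [Iio_mem_nhds ht] with y hy
      exact hd1b y hy
    rw [hev.deriv_eq]; exact deriv_const _ _
  obtain ⟨A₁, hA₁0, hA₁⟩ := aux_bdd hψ1cont (-r-σ) (-r) hd1b hd1a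
  obtain ⟨A₂, hA₂0, hA₂⟩ := aux_bdd hψ2cont (-r-σ) (-r) hd2b hd2a
  -- Gaussian bounds on MB1, MB2
  set K₁ : ℝ := c₃ * (A₁ + (1/θ)*(1+16*θ) + 0*(16*θ)) with hK₁def
  set K₂ : ℝ := c₃ * ((1/θ + A₂) + (2*A₁/θ)*(1+16*θ) + (1/θ^2)*(16*θ)) with hK₂def
  have h1θ : (0:ℝ) < 1/θ := by positivity
  have hK₁0 : 0 ≤ K₁ := by
    rw [hK₁def]
    apply mul_nonneg hc₃.le
    have : (0:ℝ) < (1/θ)*(1+16*θ) := mul_pos h1θ (by linarith)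
    linarith
  have hK₂0 : 0 ≤ K₂ := by
    rw [hK₂def]
    apply mul_nonneg hc₃.le
    have e1 : (0:ℝ) < (2*A₁/θ + 1)*(1+16*θ) := mul_pos (by positivity) (by linarith)
    have e2 : (0:ℝ) ≤ (2*A₁/θ)*(1+16*θ) := by positivity
    have e3 : (0:ℝ) ≤ (1/θ^2)*(16*θ) := by positivity
    linarith
  have hK₁b : ∀ t, |MB1 ρ θ u ψ t| ≤ K₁ * exp (-(7/16)*((t-u)^2/θ)) := fun t =>
    MB1_bound ρ θ u hρ hθ ψ hψ0 hψ1 A₁ hA₁0 hA₁ t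
  have hK₂b : ∀ t, |MB2 ρ θ u ψ t| ≤ K₂ * exp (-(7/16)*((t-u)^2/θ)) := fun t =>
    MB2_bound ρ θ u hρ hθ ψ hψ0 hψ1 A₁ A₂ hA₁0 hA₂0 hA₁ hA₂ t
  set C₁ : ℝ := exp (49/(16*θ)) * (2*K₂/r + 4*K₁/r^2) with hC₁def
  have hC₁0 : 0 ≤ C₁ := by
    rw [hC₁def]
    apply mul_nonneg (exp_pos _).le
    exact add_nonneg (div_nonneg (by linarith) hr.le) (div_nonneg (by linarith) (by positivity))
  -- factorized Maxwellian
  have hMax : ∀ (s : ℝ) (p : ℝ × ℝ), Maxwellian ρ θ u (s, p) =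
      mfun ρ θ u s * (exp (-(p.1^2/(2*θ))) * exp (-(p.2^2/(2*θ)))) := by
    intro s p
    have hsplit : ∀ a b c : ℝ, exp (-((a+b+c)/(2*θ))) =
        exp (-(a/(2*θ))) * (exp (-(b/(2*θ))) * exp (-(c/(2*θ)))) := by
      intro a b c
      rw [← exp_add, ← exp_add]
      congr 1
      ring
    simp only [Maxwellian, mfun]
    rw [← hc₃def, hsplit]
    ring
  -- integrability of the dominating Gaussian
  have i1 : Integrable (fun t : ℝ => exp (-(t^2/(2*θ)))) := by
    have hint := integrable_exp_neg_mul_sq (show (0:ℝ) < 1/(2*θ) by positivity)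
    exact hint.congr (ae_of_all _ fun t =>
      show rexp (-(1/(2*θ))*t^2) = rexp (-(t^2/(2*θ))) by
        rw [show -(1/(2*θ))*t^2 = -(t^2/(2*θ)) by ring])
  have i2 : Integrable (fun t : ℝ => exp (-((t-u)^2/(4*θ)))) := by
    have hint := (integrable_exp_neg_mul_sq
      (show (0:ℝ) < 1/(4*θ) by positivity)).comp_sub_right u
    exact hint.congr (ae_of_all _ fun t =>
      show rexp (-(1/(4*θ))*(t-u)^2) = rexp (-((t-u)^2/(4*θ))) by
        rw [show -(1/(4*θ))*(t-u)^2 = -((t-u)^2/(4*θ)) by ring])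
  have i23 : Integrable (fun p : ℝ × ℝ => exp (-(p.1^2/(2*θ))) * exp (-(p.2^2/(2*θ)))) := by
    rw [Measure.volume_eq_prod]; exact i1.mul_prod i1
  have hW : Integrable (fun ξ : ℝ×ℝ×ℝ => exp (-((ξ.1-u)^2/(4*θ))) *
      (exp (-(ξ.2.1^2/(2*θ))) * exp (-(ξ.2.2^2/(2*θ))))) := by
    rw [Measure.volume_eq_prod]; exact i2.mul_prod i23
  set J : ℝ := ∫ ξ : ℝ×ℝ×ℝ, exp (-((ξ.1-u)^2/(4*θ))) *
      (exp (-(ξ.2.1^2/(2*θ))) * exp (-(ξ.2.2^2/(2*θ)))) with hJdef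
  have hJ0 : 0 ≤ J := by
    rw [hJdef]; exact integral_nonneg (fun ξ => by positivity)
  refine ⟨min (r^2/16) (r/2), lt_min (by positivity) (by positivity),
    C₁ * Real.sqrt (J/c₃) + 1, by positivity, ?_⟩
  intro Φb Φs hΦb0 hΦbδ hΦs x hx
  obtain ⟨hΦ0, hΦub⟩ := hΦs x hx
  set Φ : ℝ := Φs x with hΦdef
  have hΦ1 : 2*Φ ≤ r^2/8 := by
    have := le_trans hΦub (hΦbδ.trans (min_le_left _ _))
    linarith
  have hΦ2 : 2*Φ ≤ r := by
    have := le_trans hΦub (hΦbδ.trans (min_le_right _ _))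
    linarith
  -- differentiability of gfun
  have hgdiff : ∀ s, DifferentiableAt ℝ (gfun ρ θ u ψ Φ) s := by
    intro s
    rcases lt_or_ge (-r) s with hs | hs
    · have hev : gfun ρ θ u ψ Φ =ᶠ[nhds s] fun _ => (0:ℝ) := by
        filter_upwards [Ioi_mem_nhds hs] with t ht
        exact gfun_zero ρ θ r u ψ hψa Φ hΦ0 t ht.le
      exact ((hasDerivAt_const s (0:ℝ)).congr_of_eventuallyEq hev).differentiableAt
    · exact (gfun_hasDerivAt ρ θ r u hθ hr ψ hψd Φ hΦ0 hΦ1 s hs).differentiableAt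
  -- the function in the statement factorizes
  have hstatF : ∀ (s : ℝ) (p : ℝ × ℝ), statF ρ θ u ψ Φs x (s, p) =
      qfun ρ θ u ψ Φ s * (exp (-(p.1^2/(2*θ))) * exp (-(p.2^2/(2*θ)))) := by
    intro s p
    simp only [statF, qfun, ← hΦdef]
    split_ifs with hc
    · rw [hMax]; simp only [MB]; ring
    · simp
  have hfun : ∀ p : ℝ × ℝ, (fun s => statF ρ θ u ψ Φs x (s, p) -
      Maxwellian ρ θ u (s, p) * ψ s) =
      fun s => gfun ρ θ u ψ Φ s * (exp (-(p.1^2/(2*θ))) * exp (-(p.2^2/(2*θ)))) := by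
    intro p
    funext s
    rw [hstatF s p, hMax s p]
    simp only [gfun, MB]
    ring
  constructor
  · intro ξ₁ ξ₂ ξ₃
    rw [hfun (ξ₂, ξ₃)]
    exact (hgdiff ξ₁).mul_const _
  -- the integral bound
  have hMaxpos : ∀ ξ : ℝ×ℝ×ℝ, 0 < Maxwellian ρ θ u ξ := by
    intro ξ
    unfold Maxwellian
    exact mul_pos (mul_pos hρ (rpow_pos_of_pos h2πθ _)) (exp_pos _)
  have hint : ∀ ξ : ℝ×ℝ×ℝ,
      (deriv (fun s => statF ρ θ u ψ Φs x (s, ξ.2) -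
        Maxwellian ρ θ u (s, ξ.2) * ψ s) ξ.1)^2 / Maxwellian ρ θ u ξ =
      (deriv (gfun ρ θ u ψ Φ) ξ.1)^2 / mfun ρ θ u ξ.1 *
        (exp (-(ξ.2.1^2/(2*θ))) * exp (-(ξ.2.2^2/(2*θ)))) := by
    intro ξ
    rw [hfun ξ.2, deriv_mul_const_field]
    have hM : Maxwellian ρ θ u ξ = mfun ρ θ u ξ.1 *
        (exp (-(ξ.2.1^2/(2*θ))) * exp (-(ξ.2.2^2/(2*θ)))) := by
      have := hMax ξ.1 ξ.2
      rwa [Prod.mk.eta] at this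
    rw [hM]
    have h1 : mfun ρ θ u ξ.1 ≠ 0 := (mfun_pos ρ θ u hρ hθ _).ne'
    have h2 : exp (-(ξ.2.1^2/(2*θ))) ≠ 0 := (exp_pos _).ne'
    have h3 : exp (-(ξ.2.2^2/(2*θ))) ≠ 0 := (exp_pos _).ne'
    field_simp
  -- pointwise domination
  have hIB : ∀ ξ : ℝ×ℝ×ℝ,
      (deriv (gfun ρ θ u ψ Φ) ξ.1)^2 / mfun ρ θ u ξ.1 *
        (exp (-(ξ.2.1^2/(2*θ))) * exp (-(ξ.2.2^2/(2*θ)))) ≤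
      ((C₁*Φ)^2/c₃) * (exp (-((ξ.1-u)^2/(4*θ))) *
        (exp (-(ξ.2.1^2/(2*θ))) * exp (-(ξ.2.2^2/(2*θ))))) := by
    intro ξ
    set t := ξ.1 with htdef
    have hb := gfun_deriv_bound ρ θ r u hθ hr ψ hψ hψa K₁ K₂ hK₁0 hK₂0 hK₁b hK₂b
      Φ hΦ0 hΦ1 hΦ2 t
    have hb' : |deriv (gfun ρ θ u ψ Φ) t| ≤ C₁ * Φ * exp (-(3/8)*((t-u)^2/θ)) := by
      rw [hC₁def]; exact hb
    have hsq : (deriv (gfun ρ θ u ψ Φ) t)^2 ≤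
        (C₁*Φ)^2 * (exp (-(3/8)*((t-u)^2/θ)))^2 := by
      have h2 := mul_self_le_mul_self (abs_nonneg (deriv (gfun ρ θ u ψ Φ) t)) hb'
      rw [abs_mul_abs_self] at h2
      nlinarith [h2]
    have hws2 : (exp (-(3/8)*((t-u)^2/θ)))^2 / mfun ρ θ u t =
        (1/c₃) * exp (-((t-u)^2/(4*θ))) := by
      have e1 : (exp (-(3/8)*((t-u)^2/θ)))^2 = exp (-(3/4)*((t-u)^2/θ)) := by
        rw [sq, ← exp_add]; congr 1; ring
      have e2 : exp (-(3/4)*((t-u)^2/θ)) / exp (-((t-u)^2/(2*θ))) =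
          exp (-((t-u)^2/(4*θ))) := by
        rw [← exp_sub]; congr 1; field_simp; ring
      rw [e1]
      simp only [mfun, ← hc₃def]
      rw [div_mul_eq_div_div_swap, e2]
      ring
    have hmt : 0 < mfun ρ θ u t := mfun_pos ρ θ u hρ hθ t
    have step1 : (deriv (gfun ρ θ u ψ Φ) t)^2 / mfun ρ θ u t ≤
        ((C₁*Φ)^2/c₃) * exp (-((t-u)^2/(4*θ))) := by
      calc (deriv (gfun ρ θ u ψ Φ) t)^2 / mfun ρ θ u t
          ≤ ((C₁*Φ)^2 * (exp (-(3/8)*((t-u)^2/θ)))^2) / mfun ρ θ u t :=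
            div_le_div_of_nonneg_right hsq hmt.le |>.trans_eq rfl
        _ = (C₁*Φ)^2 * ((exp (-(3/8)*((t-u)^2/θ)))^2 / mfun ρ θ u t) := by ring
        _ = (C₁*Φ)^2 * ((1/c₃) * exp (-((t-u)^2/(4*θ)))) := by rw [hws2]
        _ = ((C₁*Φ)^2/c₃) * exp (-((t-u)^2/(4*θ))) := by ring
    calc (deriv (gfun ρ θ u ψ Φ) t)^2 / mfun ρ θ u t *
          (exp (-(ξ.2.1^2/(2*θ))) * exp (-(ξ.2.2^2/(2*θ))))
        ≤ (((C₁*Φ)^2/c₃) * exp (-((t-u)^2/(4*θ)))) *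
          (exp (-(ξ.2.1^2/(2*θ))) * exp (-(ξ.2.2^2/(2*θ)))) :=
          mul_le_mul_of_nonneg_right step1 (by positivity)
      _ = ((C₁*Φ)^2/c₃) * (exp (-((t-u)^2/(4*θ))) *
          (exp (-(ξ.2.1^2/(2*θ))) * exp (-(ξ.2.2^2/(2*θ))))) := by ring
  -- monotonicity of the integral
  have hnn : ∀ ξ : ℝ×ℝ×ℝ, 0 ≤
      (deriv (fun s => statF ρ θ u ψ Φs x (s, ξ.2) -
        Maxwellian ρ θ u (s, ξ.2) * ψ s) ξ.1)^2 / Maxwellian ρ θ u ξ := fun ξ =>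
    div_nonneg (sq_nonneg _) (hMaxpos ξ).le
  have hmono : (∫ ξ : ℝ×ℝ×ℝ,
      (deriv (fun s => statF ρ θ u ψ Φs x (s, ξ.2) -
        Maxwellian ρ θ u (s, ξ.2) * ψ s) ξ.1)^2 / Maxwellian ρ θ u ξ) ≤
      ((C₁*Φ)^2/c₃) * J := by
    have hInt2 : Integrable (fun ξ : ℝ×ℝ×ℝ => ((C₁*Φ)^2/c₃) *
        (exp (-((ξ.1-u)^2/(4*θ))) *
          (exp (-(ξ.2.1^2/(2*θ))) * exp (-(ξ.2.2^2/(2*θ)))))) := hW.const_mul _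
    have := integral_mono_of_nonneg (ae_of_all _ hnn) hInt2
      (ae_of_all _ (fun ξ => (hint ξ).trans_le (hIB ξ)))
    rwa [integral_const_mul, ← hJdef] at this
  have hsqrt := Real.sqrt_le_sqrt hmono
  have hval : Real.sqrt (((C₁*Φ)^2/c₃) * J) = (C₁*Φ) * Real.sqrt (J/c₃) := by
    rw [show ((C₁*Φ)^2/c₃) * J = (C₁*Φ)^2 * (J/c₃) by ring,
      Real.sqrt_mul (sq_nonneg _), Real.sqrt_sq (by positivity)]
  calc Real.sqrt (∫ ξ : ℝ×ℝ×ℝ,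
        (deriv (fun s => statF ρ θ u ψ Φs x (s, ξ.2) -
          Maxwellian ρ θ u (s, ξ.2) * ψ s) ξ.1)^2 / Maxwellian ρ θ u ξ)
      ≤ Real.sqrt (((C₁*Φ)^2/c₃) * J) := hsqrt
    _ = (C₁*Φ) * Real.sqrt (J/c₃) := hval
    _ ≤ (C₁ * Real.sqrt (J/c₃) + 1) * Φ := by nlinarith [Real.sqrt_nonneg (J/c₃)]
end

section
/- Let n_e ∈ C¹(ℝ) satisfy n_e'(φ) < 0 for all φ ∈ ℝ. Let ρ : [0,∞) → ℝ be continuous and bounded, let Φ_b > 0, and let Φ : [0,∞) → ℝ be a bounded C² function satisfying ∂_{xx}Φ(x) = ρ(x) − n_e(Φ(x)) for x > 0, Φ(0) = Φ_b, lim_{x→∞} Φ(x) = 0, and ∂_xΦ ∈ L²(0,∞). Then: (i) for every M₁ ≥ Φ_b with n_e(M₁) ≤ inf_{x ≥ 0} ρ(x), one has Φ(x) ≤ M₁ for all x ≥ 0; and (ii) for every M₂ ≥ 0 with n_e(−M₂) ≥ sup_{x ≥ 0} ρ(x), one has Φ(x) ≥ −M₂ for all x ≥ 0. -/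
/-! If `Φ` exceeded `M₁` somewhere, then, since `Φ → 0 ≤ M₁` at infinity and `Φ 0 ≤ M₁`, it would
attain a maximum above `M₁` at an interior point `x > 0`. There `Φ'' x ≤ 0`, whereas the equation
and the monotonicity of `n_e` give `Φ'' x = ρ x - n_e (Φ x) > ρ x - n_e M₁ ≥ 0`. The lower bound is
the same argument applied to `-Φ`. -/

open MeasureTheory Set Filter Topology

theorem IsLocalMax.deriv_deriv_nonpos {f : ℝ → ℝ} {a : ℝ} (h : IsLocalMax f a)
    (hc : ContinuousAt f a) : deriv (deriv f) a ≤ 0 := by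
  by_contra! hpos
  have hmin : IsLocalMin f a := isLocalMin_of_deriv_deriv_pos hpos h.deriv_eq_zero hc
  have hconst : f =ᶠ[𝓝 a] fun _ ↦ f a := (h.and hmin).mono fun _ hx ↦ le_antisymm hx.1 hx.2
  have hderiv : deriv f =ᶠ[𝓝 a] fun _ ↦ 0 := by
    simpa only [deriv_const'] using hconst.deriv
  simp [hderiv.deriv_eq] at hpos

theorem Continuous.exists_isMaxOn_Ici_of_tendsto {f : ℝ → ℝ} {L a x₀ : ℝ} (hf : Continuous f)
    (hlim : Tendsto f atTop (𝓝 L)) (hx₀ : a ≤ x₀) (hLx₀ : L < f x₀) :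
    ∃ x ∈ Ici a, IsMaxOn f (Ici a) x := by
  refine hf.continuousOn.exists_isMaxOn' isClosed_Ici hx₀ ?_
  rw [eventually_inf_principal, cocompact_eq_atBot_atTop, eventually_sup]
  exact ⟨(eventually_lt_atBot a).mono fun _ hx hxa ↦ absurd hxa (not_le.2 hx),
    (hlim.eventually_lt_const hLx₀).mono fun _ hx _ ↦ hx.le⟩

theorem le_of_deriv_deriv_pos_of_tendsto {f : ℝ → ℝ} {L M : ℝ} (hf : Continuous f)
    (hlim : Tendsto f atTop (𝓝 L)) (hLM : L ≤ M) (h0 : f 0 ≤ M)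
    (hconvex : ∀ x > 0, M < f x → 0 < deriv (deriv f) x) :
    ∀ x ≥ 0, f x ≤ M := by
  by_contra! hexceeds
  obtain ⟨x₀, hx₀, hMx₀⟩ := hexceeds
  obtain ⟨x, hx, hmax⟩ := hf.exists_isMaxOn_Ici_of_tendsto hlim hx₀ (hLM.trans_lt hMx₀)
  have hMx : M < f x := hMx₀.trans_le (hmax hx₀)
  have hxpos : 0 < x := lt_of_le_of_ne hx fun h ↦ by rw [← h] at hMx; linarith
  have hlocal : IsLocalMax f x := hmax.isLocalMax (Ici_mem_nhds hxpos)
  linarith [hlocal.deriv_deriv_nonpos hf.continuousAt, hconvex x hxpos hMx]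

theorem le_of_deriv_deriv_neg_of_tendsto {f : ℝ → ℝ} {L m : ℝ} (hf : Continuous f)
    (hlim : Tendsto f atTop (𝓝 L)) (hmL : m ≤ L) (h0 : m ≤ f 0)
    (hconcave : ∀ x > 0, f x < m → deriv (deriv f) x < 0) :
    ∀ x ≥ 0, m ≤ f x := by
  have hneg := le_of_deriv_deriv_pos_of_tendsto (f := -f) hf.neg hlim.neg (neg_le_neg hmL)
    (neg_le_neg h0) fun x hx hfx ↦ by
      rw [deriv.neg', deriv.fun_neg, neg_pos]
      exact hconcave x hx (neg_lt_neg_iff.1 hfx)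
  exact fun x hx ↦ neg_le_neg_iff.1 (hneg x hx)

theorem potential_bounds_general
    (ne : ℝ → ℝ) (hne' : ∀ φ, deriv ne φ < 0)
    (ρ : ℝ → ℝ)
    (Φb : ℝ) (hΦb : 0 < Φb)
    (Φ : ℝ → ℝ) (hΦ : ContDiff ℝ 2 Φ)
    (heq : ∀ x > (0:ℝ), deriv (deriv Φ) x = ρ x - ne (Φ x))
    (h0 : Φ 0 = Φb) (hlim : Tendsto Φ atTop (nhds 0)) :
    (∀ M₁ : ℝ, Φb ≤ M₁ → (∀ x ≥ (0:ℝ), ne M₁ ≤ ρ x) → ∀ x ≥ (0:ℝ), Φ x ≤ M₁) ∧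
    (∀ M₂ : ℝ, 0 ≤ M₂ → (∀ x ≥ (0:ℝ), ρ x ≤ ne (-M₂)) → ∀ x ≥ (0:ℝ), -M₂ ≤ Φ x) := by
  have hanti : StrictAnti ne := strictAnti_of_deriv_neg hne'
  constructor
  · intro M₁ hM₁ hρM₁
    refine le_of_deriv_deriv_pos_of_tendsto hΦ.continuous hlim (hΦb.le.trans hM₁) (h0 ▸ hM₁)
      fun x hx hMx ↦ ?_
    linarith [heq x hx, hanti hMx, hρM₁ x hx.le]
  · intro M₂ hM₂ hρM₂
    refine le_of_deriv_deriv_neg_of_tendsto hΦ.continuous hlim (neg_nonpos.2 hM₂)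
      (by linarith) fun x hx hMx ↦ ?_
    linarith [heq x hx, hanti hMx, hρM₂ x hx.le]

/-- maximum-principle upper and lower bounds for the total potential `Φ`
solving `∂_{xx}Φ = ρ − n_e(Φ)` on `(0,∞)` with `Φ(0) = Φ_b`, `Φ(∞) = 0`,
`∂_xΦ ∈ L²(0,∞)`. -/
theorem potential_bounds
    (ne : ℝ → ℝ) (hne : ContDiff ℝ 1 ne) (hne' : ∀ φ, deriv ne φ < 0)
    (ρ : ℝ → ℝ) (hρc : Continuous ρ) (hρb : ∃ B, ∀ x ≥ (0:ℝ), |ρ x| ≤ B)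
    (Φb : ℝ) (hΦb : 0 < Φb)
    (Φ : ℝ → ℝ) (hΦ : ContDiff ℝ 2 Φ) (hΦbdd : ∃ B, ∀ x ≥ (0:ℝ), |Φ x| ≤ B)
    (heq : ∀ x > (0:ℝ), deriv (deriv Φ) x = ρ x - ne (Φ x))
    (h0 : Φ 0 = Φb) (hlim : Tendsto Φ atTop (nhds 0))
    (hL2 : Integrable (fun x => (deriv Φ x)^2) (volume.restrict (Set.Ioi 0))) :
    (∀ M₁ : ℝ, Φb ≤ M₁ → (∀ x ≥ (0:ℝ), ne M₁ ≤ ρ x) → ∀ x ≥ (0:ℝ), Φ x ≤ M₁) ∧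
    (∀ M₂ : ℝ, 0 ≤ M₂ → (∀ x ≥ (0:ℝ), ρ x ≤ ne (-M₂)) → ∀ x ≥ (0:ℝ), -M₂ ≤ Φ x) :=
  potential_bounds_general ne hne' ρ Φb hΦb Φ hΦ heq h0 hlim
end

section
/- Let r > 0, σ > 0, fix u∞ < −(r + 2σ), and let ψ be the cutoff described in the context. For each θ∞ > 0 there is a unique ρ∞(θ∞) > 0 such that ∫_{ℝ³} M∞(ξ) ψ(ξ) dξ = 1, where M∞ is the Maxwellian with parameters (ρ∞(θ∞), u∞, θ∞); with this choice, define μ∞(θ∞) := ( ∫_{{ξ ∈ ℝ³ : ξ₁ < 0}} |∂_{ξ₁}(M∞ψ − M∞)(ξ)|² / M∞(ξ) dξ )^{1/2}. Then ρ∞(θ∞) → 1 and μ∞(θ∞) → 0 as θ∞ → 0⁺. -/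
open MeasureTheory Real Set Filter

/-- The constant `μ∞ = ‖∂_{ξ₁}(M∞ψ − M∞) M∞^{-1/2} χ(ξ₁<0)‖_{L²_ξ}` appearing in the
stability condition. -/
noncomputable def muInf (ρ θ u : ℝ) (ψ : ℝ → ℝ) : ℝ :=
  Real.sqrt (∫ ξ in {ξ : ℝ × ℝ × ℝ | ξ.1 < 0},
    (deriv (fun s => Maxwellian ρ θ u (s, ξ.2) * ψ s - Maxwellian ρ θ u (s, ξ.2)) ξ.1)^2
      / Maxwellian ρ θ u ξ)

lemma gauss_int {θ : ℝ} (hθ : 0 < θ) :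
    ∫ x : ℝ, Real.exp (-(x^2/(2*θ))) = Real.sqrt (2*π*θ) := by
  have h : ∀ x : ℝ, Real.exp (-(x^2/(2*θ))) = Real.exp (-(1/(2*θ)) * x^2) := by
    intro x; ring_nf
  simp_rw [h]
  rw [integral_gaussian]
  rw [div_div_eq_mul_div, div_one] 
  congr 1
  ring

lemma gauss_norm {θ : ℝ} (hθ : 0 < θ) :
    ∫ x : ℝ, (2*π*θ) ^ (-(1:ℝ)/2) * Real.exp (-(x^2/(2*θ))) = 1 := by
  have h2 : (0:ℝ) < 2*π*θ := by positivity
  rw [integral_const_mul, gauss_int hθ, Real.sqrt_eq_rpow, ← Real.rpow_add h2]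
  norm_num

lemma gauss_integrable {θ : ℝ} (hθ : 0 < θ) :
    Integrable (fun x : ℝ => Real.exp (-(x^2/(2*θ)))) := by
  have h : ∀ x : ℝ, Real.exp (-(x^2/(2*θ))) = Real.exp (-(1/(2*θ)) * x^2) := by
    intro x; ring_nf
  simp_rw [h]
  exact integrable_exp_neg_mul_sq (by positivity)

lemma gauss_integrable_shift {θ u : ℝ} (hθ : 0 < θ) :
    Integrable (fun x : ℝ => Real.exp (-((x-u)^2/(2*θ)))) :=
  (gauss_integrable hθ).comp_sub_right u

lemma gauss_int_shift {θ u : ℝ} (hθ : 0 < θ) :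
    ∫ x : ℝ, Real.exp (-((x-u)^2/(2*θ))) = Real.sqrt (2*π*θ) := by
  rw [integral_sub_right_eq_self (fun x : ℝ => Real.exp (-(x^2/(2*θ)))) u]
  exact gauss_int hθ

/-- factorization of the 3-D integrand -/
lemma max_factor {ρ θ u : ℝ} (hθ : 0 < θ) (ψ : ℝ → ℝ) (ξ : ℝ × ℝ × ℝ) :
    Maxwellian ρ θ u ξ * ψ ξ.1 =
      (ρ * ((2*π*θ) ^ (-(1:ℝ)/2) * Real.exp (-((ξ.1-u)^2/(2*θ))) * ψ ξ.1)) *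
      (((2*π*θ) ^ (-(1:ℝ)/2) * Real.exp (-(ξ.2.1^2/(2*θ)))) *
       ((2*π*θ) ^ (-(1:ℝ)/2) * Real.exp (-(ξ.2.2^2/(2*θ))))) := by
  have h2 : (0:ℝ) < 2*π*θ := by positivity
  have hc : (2*π*θ) ^ (-(3:ℝ)/2)
      = (2*π*θ) ^ (-(1:ℝ)/2) * ((2*π*θ) ^ (-(1:ℝ)/2) * (2*π*θ) ^ (-(1:ℝ)/2)) := by
    rw [← Real.rpow_add h2, ← Real.rpow_add h2]; norm_num
  have he : Real.exp (-(((ξ.1 - u)^2 + ξ.2.1^2 + ξ.2.2^2) / (2 * θ)))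
      = Real.exp (-((ξ.1-u)^2/(2*θ))) * (Real.exp (-(ξ.2.1^2/(2*θ))) * Real.exp (-(ξ.2.2^2/(2*θ)))) := by
    rw [← Real.exp_add, ← Real.exp_add]; ring_nf
  rw [Maxwellian, hc, he]; ring

lemma max_integral {ρ θ u : ℝ} (hθ : 0 < θ) (ψ : ℝ → ℝ) :
    (∫ ξ : ℝ × ℝ × ℝ, Maxwellian ρ θ u ξ * ψ ξ.1)
      = ρ * ∫ s : ℝ, (2*π*θ) ^ (-(1:ℝ)/2) * Real.exp (-((s-u)^2/(2*θ))) * ψ s := by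
  have h2 : (0:ℝ) < 2*π*θ := by positivity
  simp_rw [max_factor hθ ψ]
  rw [MeasureTheory.Measure.volume_eq_prod, MeasureTheory.integral_prod_mul
    (fun s : ℝ => ρ * ((2*π*θ) ^ (-(1:ℝ)/2) * Real.exp (-((s-u)^2/(2*θ))) * ψ s))
    (fun p : ℝ × ℝ => ((2*π*θ) ^ (-(1:ℝ)/2) * Real.exp (-(p.1^2/(2*θ)))) *
       ((2*π*θ) ^ (-(1:ℝ)/2) * Real.exp (-(p.2^2/(2*θ))))),
    MeasureTheory.Measure.volume_eq_prod, MeasureTheory.integral_prod_mul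
    (fun t : ℝ => (2*π*θ) ^ (-(1:ℝ)/2) * Real.exp (-(t^2/(2*θ))))
    (fun t : ℝ => (2*π*θ) ^ (-(1:ℝ)/2) * Real.exp (-(t^2/(2*θ)))),
    gauss_norm hθ, integral_const_mul]
  ring

lemma gauss_norm_shift {θ u : ℝ} (hθ : 0 < θ) :
    ∫ x : ℝ, (2*π*θ) ^ (-(1:ℝ)/2) * Real.exp (-((x-u)^2/(2*θ))) = 1 := by
  have h2 : (0:ℝ) < 2*π*θ := by positivity
  rw [integral_const_mul, gauss_int_shift hθ, Real.sqrt_eq_rpow, ← Real.rpow_add h2]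
  norm_num

lemma c_mul_sqrt {θ : ℝ} (hθ : 0 < θ) :
    (2*π*θ) ^ (-(1:ℝ)/2) * Real.sqrt (2*π*θ) = 1 := by
  have h2 : (0:ℝ) < 2*π*θ := by positivity
  rw [Real.sqrt_eq_rpow, ← Real.rpow_add h2]; norm_num

lemma J1_integrable {θ u : ℝ} (hθ : 0 < θ) (ψ : ℝ → ℝ) (hψm : Continuous ψ)
    (hψ0 : ∀ s, 0 ≤ ψ s) (hψ1 : ∀ s, ψ s ≤ 1) :
    Integrable (fun s : ℝ => (2*π*θ) ^ (-(1:ℝ)/2) * Real.exp (-((s-u)^2/(2*θ))) * ψ s) := by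
  have h := (((gauss_integrable_shift (u := u) hθ)).const_mul
    ((2*π*θ) ^ (-(1:ℝ)/2))).bdd_mul (c := 1) hψm.aestronglyMeasurable
    (Filter.Eventually.of_forall fun s => by rw [Real.norm_eq_abs, abs_le]; exact ⟨by linarith [hψ0 s], hψ1 s⟩)
  exact h.congr (Filter.Eventually.of_forall fun s => by ring)

lemma J1_pos {θ u r σ : ℝ} (hθ : 0 < θ) (hσ : 0 < σ) (ψ : ℝ → ℝ) (hψm : Continuous ψ)
    (hψ0 : ∀ s, 0 ≤ ψ s) (hψ1 : ∀ s, ψ s ≤ 1) (hψb : ∀ s, s ≤ -r - σ → ψ s = 1) :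
    0 < ∫ s : ℝ, (2*π*θ) ^ (-(1:ℝ)/2) * Real.exp (-((s-u)^2/(2*θ))) * ψ s := by
  have h2 : (0:ℝ) < 2*π*θ := by positivity
  have hnn : 0 ≤ᵐ[volume] fun s : ℝ => (2*π*θ) ^ (-(1:ℝ)/2) * Real.exp (-((s-u)^2/(2*θ))) * ψ s :=
    Filter.Eventually.of_forall fun s => mul_nonneg (by positivity) (hψ0 s)
  rw [integral_pos_iff_support_of_nonneg_ae hnn (J1_integrable hθ ψ hψm hψ0 hψ1)]
  have hsub : Set.Iic (-r-σ) ⊆ Function.support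
      (fun s : ℝ => (2*π*θ) ^ (-(1:ℝ)/2) * Real.exp (-((s-u)^2/(2*θ))) * ψ s) := by
    intro s hs
    simp only [Function.mem_support]
    rw [hψb s hs]
    positivity
  calc (0:ENNReal) < volume (Set.Iic (-r-σ)) := by rw [Real.volume_Iic]; simp
    _ ≤ _ := measure_mono hsub

lemma tendsto_pow_inv_exp (n : ℕ) {c : ℝ} (hc : 0 < c) :
    Tendsto (fun θ : ℝ => (θ⁻¹)^n * Real.exp (-(c/θ))) (nhdsWithin 0 (Set.Ioi 0)) (nhds 0) := by
  have h1 : Tendsto (fun x : ℝ => x^n * Real.exp (-(c*x))) atTop (nhds 0) := by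
    have h := tendsto_rpow_mul_exp_neg_mul_atTop_nhds_zero (n : ℝ) c hc
    refine h.congr' ?_
    filter_upwards [eventually_gt_atTop (0:ℝ)] with x hx
    rw [Real.rpow_natCast, neg_mul]
  have h2 := h1.comp tendsto_inv_nhdsGT_zero
  refine h2.congr fun θ => ?_
  simp only [Function.comp]
  rw [div_eq_mul_inv]

lemma exp_gauss_le {θ t δ : ℝ} (hθ : 0 < θ) (hδ : 0 < δ) (ht : δ ≤ t) :
    Real.exp (-(t^2/(2*θ))) ≤ Real.exp (-(δ^2/(2*(2*θ)))) * Real.exp (-(t^2/(2*(2*θ)))) := by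
  rw [← Real.exp_add]
  apply Real.exp_le_exp.mpr
  have hδt : δ^2 ≤ t^2 := by nlinarith
  have h1 : t^2/(2*θ) = t^2/(2*(2*θ)) + t^2/(2*(2*θ)) := by ring
  have h2 : δ^2/(2*(2*θ)) ≤ t^2/(2*(2*θ)) := by gcongr
  linarith

lemma one_sub_J1 {θ u r σ : ℝ} (hθ : 0 < θ) (hδ : 0 < -r-σ-u)
    (ψ : ℝ → ℝ) (hψm : Continuous ψ)
    (hψ0 : ∀ s, 0 ≤ ψ s) (hψ1 : ∀ s, ψ s ≤ 1) (hψb : ∀ s, s ≤ -r - σ → ψ s = 1) :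
    0 ≤ 1 - (∫ s : ℝ, (2*π*θ) ^ (-(1:ℝ)/2) * Real.exp (-((s-u)^2/(2*θ))) * ψ s) ∧
    1 - (∫ s : ℝ, (2*π*θ) ^ (-(1:ℝ)/2) * Real.exp (-((s-u)^2/(2*θ))) * ψ s)
      ≤ Real.sqrt 2 * Real.exp (-((-r-σ-u)^2/(2*(2*θ)))) := by
  have h2 : (0:ℝ) < 2*π*θ := by positivity
  set c : ℝ := (2*π*θ) ^ (-(1:ℝ)/2) with hc
  have hcpos : 0 < c := by rw [hc]; positivity
  set δ : ℝ := -r-σ-u with hδdef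
  have hint1 : Integrable (fun s : ℝ => c * Real.exp (-((s-u)^2/(2*θ)))) :=
    (gauss_integrable_shift hθ).const_mul c
  have hint2 := J1_integrable (u := u) hθ ψ hψm hψ0 hψ1
  have heq : 1 - (∫ s : ℝ, c * Real.exp (-((s-u)^2/(2*θ))) * ψ s)
      = ∫ s : ℝ, (c * Real.exp (-((s-u)^2/(2*θ))) - c * Real.exp (-((s-u)^2/(2*θ))) * ψ s) := by
    rw [integral_sub hint1 hint2, gauss_norm_shift hθ]
  constructor
  · rw [heq]
    apply integral_nonneg
    intro s
    have hpos : 0 < Real.exp (-((s-u)^2/(2*θ))) := Real.exp_pos _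
    simp only [Pi.zero_apply]
    nlinarith [mul_nonneg (mul_nonneg hcpos.le hpos.le) (sub_nonneg.mpr (hψ1 s))]
  · rw [heq]
    have hGint : Integrable (fun s : ℝ =>
        c * Real.exp (-(δ^2/(2*(2*θ)))) * Real.exp (-((s-u)^2/(2*(2*θ))))) := by
      exact ((gauss_integrable_shift (θ := 2*θ) (u := u) (by positivity)).const_mul _)
    have hle : ∀ s : ℝ, c * Real.exp (-((s-u)^2/(2*θ))) - c * Real.exp (-((s-u)^2/(2*θ))) * ψ s
        ≤ c * Real.exp (-(δ^2/(2*(2*θ)))) * Real.exp (-((s-u)^2/(2*(2*θ)))) := by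
      intro s
      rcases le_or_gt s (-r-σ) with hs | hs
      · rw [hψb s hs]
        simp only [mul_one, sub_self]
        positivity
      · have ht : δ ≤ s - u := by simp only [hδdef]; linarith
        have hb := exp_gauss_le hθ hδ ht
        have h01 : 0 ≤ ψ s := hψ0 s
        have hpos : 0 < Real.exp (-((s-u)^2/(2*θ))) := Real.exp_pos _
        calc c * Real.exp (-((s-u)^2/(2*θ))) - c * Real.exp (-((s-u)^2/(2*θ))) * ψ s
            ≤ c * Real.exp (-((s-u)^2/(2*θ))) := by
              nlinarith [mul_nonneg (mul_nonneg hcpos.le hpos.le) h01]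
          _ ≤ c * (Real.exp (-(δ^2/(2*(2*θ)))) * Real.exp (-((s-u)^2/(2*(2*θ))))) := by
              exact mul_le_mul_of_nonneg_left hb hcpos.le
          _ = _ := by ring
    have hnn : 0 ≤ᵐ[volume] fun s : ℝ =>
        c * Real.exp (-((s-u)^2/(2*θ))) - c * Real.exp (-((s-u)^2/(2*θ))) * ψ s := by
      refine Filter.Eventually.of_forall fun s => ?_
      have hpos : 0 < Real.exp (-((s-u)^2/(2*θ))) := Real.exp_pos _
      simp only [Pi.zero_apply]
      nlinarith [mul_nonneg (mul_nonneg hcpos.le hpos.le) (sub_nonneg.mpr (hψ1 s))]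
    calc _ ≤ ∫ s : ℝ, c * Real.exp (-(δ^2/(2*(2*θ)))) * Real.exp (-((s-u)^2/(2*(2*θ)))) :=
        integral_mono_of_nonneg hnn hGint (Filter.Eventually.of_forall hle)
      _ = Real.sqrt 2 * Real.exp (-(δ^2/(2*(2*θ)))) := by
          rw [integral_const_mul, gauss_int_shift (θ := 2*θ) (by positivity)]
          have : Real.sqrt (2*π*(2*θ)) = Real.sqrt 2 * Real.sqrt (2*π*θ) := by
            rw [← Real.sqrt_mul (by norm_num)]
            congr 1; ring
          rw [this]
          have := c_mul_sqrt hθ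
          rw [← hc] at this
          calc c * Real.exp (-(δ^2/(2*(2*θ)))) * (Real.sqrt 2 * Real.sqrt (2*π*θ))
              = (c * Real.sqrt (2*π*θ)) * Real.sqrt 2 * Real.exp (-(δ^2/(2*(2*θ)))) := by ring
            _ = _ := by rw [this]; ring

lemma J1_tendsto {u r σ : ℝ} (hδ : 0 < -r-σ-u)
    (ψ : ℝ → ℝ) (hψm : Continuous ψ)
    (hψ0 : ∀ s, 0 ≤ ψ s) (hψ1 : ∀ s, ψ s ≤ 1) (hψb : ∀ s, s ≤ -r - σ → ψ s = 1) :
    Tendsto (fun θ : ℝ => ∫ s : ℝ, (2*π*θ) ^ (-(1:ℝ)/2) * Real.exp (-((s-u)^2/(2*θ))) * ψ s)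
      (nhdsWithin 0 (Set.Ioi 0)) (nhds 1) := by
  set δ : ℝ := -r-σ-u with hδdef
  have hbound : Tendsto (fun θ : ℝ => Real.sqrt 2 * Real.exp (-(δ^2/(2*(2*θ)))))
      (nhdsWithin 0 (Set.Ioi 0)) (nhds 0) := by
    have h := (tendsto_pow_inv_exp 0 (c := δ^2/4) (by positivity)).const_mul (Real.sqrt 2)
    simp only [pow_zero, one_mul, mul_zero] at h
    refine h.congr fun θ => ?_
    congr 2
    ring
  have hsq : Tendsto (fun θ : ℝ =>
      1 - ∫ s : ℝ, (2*π*θ) ^ (-(1:ℝ)/2) * Real.exp (-((s-u)^2/(2*θ))) * ψ s)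
      (nhdsWithin 0 (Set.Ioi 0)) (nhds 0) := by
    apply squeeze_zero'
    · filter_upwards [self_mem_nhdsWithin] with θ hθ
      exact (one_sub_J1 hθ hδ ψ hψm hψ0 hψ1 hψb).1
    · filter_upwards [self_mem_nhdsWithin] with θ hθ
      exact (one_sub_J1 hθ hδ ψ hψm hψ0 hψ1 hψb).2
    · exact hbound
  have := tendsto_const_nhds (x := (1:ℝ)) (f := nhdsWithin (0:ℝ) (Set.Ioi 0)) |>.sub hsq
  simp only [sub_sub_cancel, sub_zero] at this
  exact this

lemma maxwellian_pos {ρ θ u : ℝ} (hρ : 0 < ρ) (hθ : 0 < θ) (ξ : ℝ × ℝ × ℝ) :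
    0 < Maxwellian ρ θ u ξ := by
  rw [Maxwellian]
  positivity

lemma deriv_formula {ρ θ u : ℝ} (hθ : 0 < θ) {ψ : ℝ → ℝ} (hψd : Differentiable ℝ ψ)
    (p : ℝ × ℝ) (x : ℝ) :
    deriv (fun s => Maxwellian ρ θ u (s, p) * ψ s - Maxwellian ρ θ u (s, p)) x
      = Maxwellian ρ θ u (x, p) * (deriv ψ x - ((x-u)/θ) * (ψ x - 1)) := by
  have hfun : (fun s => Maxwellian ρ θ u (s, p) * ψ s - Maxwellian ρ θ u (s, p))
      = fun s => (ρ * (2 * π * θ) ^ (-(3:ℝ)/2) *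
          Real.exp (-(((s - u)^2 + p.1^2 + p.2^2) / (2 * θ)))) * (ψ s - 1) := by
    funext s
    simp only [Maxwellian]
    ring
  rw [hfun]
  have h1 : HasDerivAt (fun s : ℝ => (s - u)^2 + p.1^2 + p.2^2) (2*(x-u)) x := by
    have := (((hasDerivAt_id x).sub_const u).pow 2).add_const (p.1^2)
    have h := this.add_const (p.2^2)
    simpa using h
  have h2 : HasDerivAt (fun s : ℝ => -(((s - u)^2 + p.1^2 + p.2^2) / (2 * θ)))
      (-((x-u)/θ)) x := by
    have : HasDerivAt (fun s : ℝ => -(((s - u)^2 + p.1^2 + p.2^2) / (2 * θ))) (-(2*(x-u)/(2*θ))) x :=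
      (h1.div_const (2*θ)).neg
    convert this using 1
    ring
  have h3 : HasDerivAt (fun s : ℝ => ρ * (2 * π * θ) ^ (-(3:ℝ)/2) *
      Real.exp (-(((s - u)^2 + p.1^2 + p.2^2) / (2 * θ))))
      (ρ * (2 * π * θ) ^ (-(3:ℝ)/2) *
        (Real.exp (-(((x - u)^2 + p.1^2 + p.2^2) / (2 * θ))) * (-((x-u)/θ)))) x := by
    exact (h2.exp).const_mul _
  have h4 : HasDerivAt (fun s : ℝ => ψ s - 1) (deriv ψ x) x :=
    ((hψd x).hasDerivAt).sub_const 1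
  have h5 := h3.mul h4
  rw [HasDerivAt.deriv (f := fun s => ρ * (2 * π * θ) ^ (-(3:ℝ)/2) * Real.exp (-(((s - u)^2 + p.1^2 + p.2^2) / (2 * θ))) * (ψ s - 1)) h5]
  simp only [Maxwellian]
  ring

lemma max_split {ρ θ u : ℝ} (ξ : ℝ × ℝ × ℝ) :
    Maxwellian ρ θ u ξ = ρ * (2 * π * θ) ^ (-(3:ℝ)/2) *
      (Real.exp (-((ξ.1-u)^2/(2*θ))) *
        (Real.exp (-(ξ.2.1^2/(2*θ))) * Real.exp (-(ξ.2.2^2/(2*θ))))) := by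
  rw [Maxwellian, ← Real.exp_add, ← Real.exp_add]
  ring_nf

lemma deriv_psi_zero {r σ : ℝ} {ψ : ℝ → ℝ} (hψb : ∀ s, s ≤ -r - σ → ψ s = 1)
    {s : ℝ} (hs : s < -r - σ) : deriv ψ s = 0 := by
  have h : ψ =ᶠ[nhds s] fun _ => 1 :=
    Filter.eventually_of_mem (Iio_mem_nhds hs) (fun y hy => hψb y (le_of_lt hy))
  rw [h.deriv_eq]
  exact deriv_const s 1

lemma pointwise_bound {ρ θ u r σ C : ℝ} (hρ : 0 < ρ) (hθ : 0 < θ) (hσ : 0 < σ)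
    (hu : u < -(r + 2*σ)) {ψ : ℝ → ℝ} (hψd : Differentiable ℝ ψ)
    (hψ0 : ∀ s, 0 ≤ ψ s) (hψ1 : ∀ s, ψ s ≤ 1) (hψb : ∀ s, s ≤ -r - σ → ψ s = 1)
    (hC : ∀ x ∈ Set.Icc (-r-σ) 0, |deriv ψ x| ≤ C)
    (ξ : ℝ × ℝ × ℝ) (hξ : ξ.1 < 0) :
    (deriv (fun s => Maxwellian ρ θ u (s, ξ.2) * ψ s - Maxwellian ρ θ u (s, ξ.2)) ξ.1)^2
        / Maxwellian ρ θ u ξ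
      ≤ (ρ * (2*π*θ) ^ (-(3:ℝ)/2) * (C + (-u)/θ)^2 * Real.exp (-((-r-σ-u)^2/(2*(2*θ)))))
        * (Real.exp (-((ξ.1-u)^2/(2*(2*θ))))
            * (Real.exp (-(ξ.2.1^2/(2*θ))) * Real.exp (-(ξ.2.2^2/(2*θ))))) := by
  have h2 : (0:ℝ) < 2*π*θ := by positivity
  have hδ : (0:ℝ) < -r-σ-u := by linarith
  have hM : 0 < Maxwellian ρ θ u ξ := maxwellian_pos hρ hθ ξ
  have hMe : Maxwellian ρ θ u (ξ.1, ξ.2) = Maxwellian ρ θ u ξ := rfl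
  rw [deriv_formula hθ hψd ξ.2 ξ.1, hMe]
  set X : ℝ := deriv ψ ξ.1 - ((ξ.1-u)/θ) * (ψ ξ.1 - 1) with hX
  have hdiv : (Maxwellian ρ θ u ξ * X)^2 / Maxwellian ρ θ u ξ
      = Maxwellian ρ θ u ξ * X^2 := by
    field_simp
  rw [hdiv, max_split ξ]
  have hK : (0:ℝ) ≤ (C + (-u)/θ)^2 := sq_nonneg _
  rcases lt_or_ge ξ.1 (-r-σ) with hcase | hcase
  · -- X = 0
    have hd0 : deriv ψ ξ.1 = 0 := deriv_psi_zero hψb hcase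
    have hp1 : ψ ξ.1 = 1 := hψb _ (le_of_lt hcase)
    have hX0 : X = 0 := by rw [hX, hd0, hp1]; ring
    rw [hX0]
    have : (0:ℝ) ≤ (ρ * (2*π*θ) ^ (-(3:ℝ)/2) * (C + (-u)/θ)^2 *
        Real.exp (-((-r-σ-u)^2/(2*(2*θ)))))
        * (Real.exp (-((ξ.1-u)^2/(2*(2*θ))))
            * (Real.exp (-(ξ.2.1^2/(2*θ))) * Real.exp (-(ξ.2.2^2/(2*θ))))) := by
      have h1 : (0:ℝ) ≤ ρ * (2*π*θ) ^ (-(3:ℝ)/2) := by positivity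
      have h3 : (0:ℝ) ≤ Real.exp (-((-r-σ-u)^2/(2*(2*θ)))) := (Real.exp_pos _).le
      have h4 : (0:ℝ) ≤ Real.exp (-((ξ.1-u)^2/(2*(2*θ))))
          * (Real.exp (-(ξ.2.1^2/(2*θ))) * Real.exp (-(ξ.2.2^2/(2*θ)))) := by positivity
      exact mul_nonneg (mul_nonneg (mul_nonneg h1 hK) h3) h4
    calc _ = (0:ℝ) := by ring
      _ ≤ _ := this
  · -- main estimate
    have ht1 : -r-σ-u ≤ ξ.1 - u := by linarith
    have ht2 : ξ.1 - u ≤ -u := by linarith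
    have ht0 : 0 < ξ.1 - u := by linarith
    have hdd : |deriv ψ ξ.1| ≤ C := hC ξ.1 ⟨hcase, le_of_lt hξ⟩
    have habs2 : |((ξ.1-u)/θ) * (ψ ξ.1 - 1)| ≤ (-u)/θ := by
      rw [abs_mul]
      have h1 : |(ξ.1-u)/θ| = (ξ.1-u)/θ := abs_of_pos (by positivity)
      have h2' : |ψ ξ.1 - 1| ≤ 1 := by
        rw [abs_le]; constructor <;> [linarith [hψ0 ξ.1]; linarith [hψ1 ξ.1]]
      calc |(ξ.1-u)/θ| * |ψ ξ.1 - 1| ≤ ((ξ.1-u)/θ) * 1 := by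
            rw [h1]; exact mul_le_mul_of_nonneg_left h2' (by positivity)
        _ ≤ (-u)/θ := by rw [mul_one]; gcongr
      
    have hXabs : |X| ≤ C + (-u)/θ := by
      rw [hX]
      calc |deriv ψ ξ.1 - ((ξ.1-u)/θ) * (ψ ξ.1 - 1)|
          ≤ |deriv ψ ξ.1| + |((ξ.1-u)/θ) * (ψ ξ.1 - 1)| := abs_sub _ _
        _ ≤ C + (-u)/θ := add_le_add hdd habs2
    have hX2 : X^2 ≤ (C + (-u)/θ)^2 := by
      rcases abs_le.mp hXabs with ⟨hl, hr'⟩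
      exact sq_le_sq' hl hr'
    have hE : Real.exp (-((ξ.1-u)^2/(2*θ)))
        ≤ Real.exp (-((-r-σ-u)^2/(2*(2*θ)))) * Real.exp (-((ξ.1-u)^2/(2*(2*θ)))) :=
      exp_gauss_le hθ hδ ht1
    have hEpos : (0:ℝ) ≤ Real.exp (-((-r-σ-u)^2/(2*(2*θ)))) * Real.exp (-((ξ.1-u)^2/(2*(2*θ)))) := by
      positivity
    have hmain : Real.exp (-((ξ.1-u)^2/(2*θ))) * X^2
        ≤ (Real.exp (-((-r-σ-u)^2/(2*(2*θ)))) * Real.exp (-((ξ.1-u)^2/(2*(2*θ))))) * (C + (-u)/θ)^2 :=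
      mul_le_mul hE hX2 (sq_nonneg X) hEpos
    have hfac : (0:ℝ) ≤ ρ * (2*π*θ) ^ (-(3:ℝ)/2)
        * (Real.exp (-(ξ.2.1^2/(2*θ))) * Real.exp (-(ξ.2.2^2/(2*θ)))) := by positivity
    calc ρ * (2 * π * θ) ^ (-(3:ℝ)/2) *
          (Real.exp (-((ξ.1-u)^2/(2*θ))) *
            (Real.exp (-(ξ.2.1^2/(2*θ))) * Real.exp (-(ξ.2.2^2/(2*θ))))) * X^2
        = (ρ * (2*π*θ) ^ (-(3:ℝ)/2)
            * (Real.exp (-(ξ.2.1^2/(2*θ))) * Real.exp (-(ξ.2.2^2/(2*θ)))))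
          * (Real.exp (-((ξ.1-u)^2/(2*θ))) * X^2) := by ring
      _ ≤ (ρ * (2*π*θ) ^ (-(3:ℝ)/2)
            * (Real.exp (-(ξ.2.1^2/(2*θ))) * Real.exp (-(ξ.2.2^2/(2*θ)))))
          * ((Real.exp (-((-r-σ-u)^2/(2*(2*θ)))) * Real.exp (-((ξ.1-u)^2/(2*(2*θ)))))
              * (C + (-u)/θ)^2) :=
          mul_le_mul_of_nonneg_left hmain hfac
      _ = _ := by ring

lemma G_integrable {θ u A : ℝ} (hθ : 0 < θ) :
    Integrable (fun ξ : ℝ × ℝ × ℝ => A * (Real.exp (-((ξ.1-u)^2/(2*(2*θ))))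
      * (Real.exp (-(ξ.2.1^2/(2*θ))) * Real.exp (-(ξ.2.2^2/(2*θ)))))) := by
  have h1 : Integrable (fun s : ℝ => Real.exp (-((s-u)^2/(2*(2*θ))))) :=
    gauss_integrable_shift (by positivity)
  have h23 : Integrable (fun p : ℝ × ℝ =>
      Real.exp (-(p.1^2/(2*θ))) * Real.exp (-(p.2^2/(2*θ)))) := by
    rw [MeasureTheory.Measure.volume_eq_prod]
    exact (gauss_integrable hθ).mul_prod (gauss_integrable hθ)
  have h : Integrable (fun ξ : ℝ × ℝ × ℝ => Real.exp (-((ξ.1-u)^2/(2*(2*θ))))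
      * (Real.exp (-(ξ.2.1^2/(2*θ))) * Real.exp (-(ξ.2.2^2/(2*θ))))) := by
    rw [MeasureTheory.Measure.volume_eq_prod]
    exact h1.mul_prod h23
  exact h.const_mul A

lemma G_integral {θ u A : ℝ} (hθ : 0 < θ) :
    (∫ ξ : ℝ × ℝ × ℝ, A * (Real.exp (-((ξ.1-u)^2/(2*(2*θ))))
      * (Real.exp (-(ξ.2.1^2/(2*θ))) * Real.exp (-(ξ.2.2^2/(2*θ))))))
    = A * (Real.sqrt (2*π*(2*θ)) * (Real.sqrt (2*π*θ) * Real.sqrt (2*π*θ))) := by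
  rw [integral_const_mul, MeasureTheory.Measure.volume_eq_prod,
    MeasureTheory.integral_prod_mul (fun s : ℝ => Real.exp (-((s-u)^2/(2*(2*θ)))))
      (fun p : ℝ × ℝ => Real.exp (-(p.1^2/(2*θ))) * Real.exp (-(p.2^2/(2*θ)))),
    MeasureTheory.Measure.volume_eq_prod,
    MeasureTheory.integral_prod_mul (fun t : ℝ => Real.exp (-(t^2/(2*θ))))
      (fun t : ℝ => Real.exp (-(t^2/(2*θ)))),
    gauss_int_shift (by positivity : (0:ℝ) < 2*θ), gauss_int hθ]

lemma sqrt_simp {θ : ℝ} (hθ : 0 < θ) :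
    (2*π*θ) ^ (-(3:ℝ)/2) * (Real.sqrt (2*π*(2*θ)) * (Real.sqrt (2*π*θ) * Real.sqrt (2*π*θ)))
      = Real.sqrt 2 := by
  have h2 : (0:ℝ) < 2*π*θ := by positivity
  have e1 : Real.sqrt (2*π*(2*θ)) = Real.sqrt 2 * Real.sqrt (2*π*θ) := by
    rw [← Real.sqrt_mul (by norm_num : (0:ℝ) ≤ 2)]
    congr 1; ring
  have e2 : Real.sqrt (2*π*θ) * Real.sqrt (2*π*θ) = 2*π*θ := Real.mul_self_sqrt h2.le
  have e3 : (2*π*θ) ^ (-(3:ℝ)/2) * (2*π*θ) ^ (1:ℝ) = (2*π*θ) ^ (-(1:ℝ)/2) := by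
    rw [← Real.rpow_add h2]; norm_num
  rw [Real.rpow_one] at e3
  have e4 := c_mul_sqrt hθ
  rw [e1, e2]
  calc (2*π*θ) ^ (-(3:ℝ)/2) * (Real.sqrt 2 * Real.sqrt (2*π*θ) * (2*π*θ))
      = ((2*π*θ) ^ (-(3:ℝ)/2) * (2*π*θ)) * Real.sqrt (2*π*θ) * Real.sqrt 2 := by ring
    _ = Real.sqrt 2 := by rw [e3, e4, one_mul]

lemma Isq_bound {ρ θ u r σ C : ℝ} (hρ : 0 < ρ) (hθ : 0 < θ) (hσ : 0 < σ)
    (hu : u < -(r + 2*σ)) {ψ : ℝ → ℝ} (hψd : Differentiable ℝ ψ)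
    (hψ0 : ∀ s, 0 ≤ ψ s) (hψ1 : ∀ s, ψ s ≤ 1) (hψb : ∀ s, s ≤ -r - σ → ψ s = 1)
    (hC : ∀ x ∈ Set.Icc (-r-σ) 0, |deriv ψ x| ≤ C) :
    0 ≤ (∫ ξ in {ξ : ℝ × ℝ × ℝ | ξ.1 < 0},
        (deriv (fun s => Maxwellian ρ θ u (s, ξ.2) * ψ s - Maxwellian ρ θ u (s, ξ.2)) ξ.1)^2
          / Maxwellian ρ θ u ξ) ∧
    (∫ ξ in {ξ : ℝ × ℝ × ℝ | ξ.1 < 0},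
        (deriv (fun s => Maxwellian ρ θ u (s, ξ.2) * ψ s - Maxwellian ρ θ u (s, ξ.2)) ξ.1)^2
          / Maxwellian ρ θ u ξ)
      ≤ Real.sqrt 2 * ρ * ((C + (-u)/θ)^2 * Real.exp (-((-r-σ-u)^2/(2*(2*θ))))) := by
  have h2 : (0:ℝ) < 2*π*θ := by positivity
  have hmeas : MeasurableSet {ξ : ℝ × ℝ × ℝ | ξ.1 < 0} :=
    measurableSet_lt measurable_fst measurable_const
  set A : ℝ := ρ * (2*π*θ) ^ (-(3:ℝ)/2) * (C + (-u)/θ)^2 *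
    Real.exp (-((-r-σ-u)^2/(2*(2*θ)))) with hA
  have hA0 : 0 ≤ A := by
    rw [hA]
    exact mul_nonneg (mul_nonneg (mul_nonneg hρ.le (by positivity)) (sq_nonneg _))
      (Real.exp_pos _).le
  constructor
  · exact setIntegral_nonneg hmeas fun ξ _ =>
      div_nonneg (sq_nonneg _) (maxwellian_pos hρ hθ ξ).le
  · have h1 : (∫ ξ in {ξ : ℝ × ℝ × ℝ | ξ.1 < 0},
        (deriv (fun s => Maxwellian ρ θ u (s, ξ.2) * ψ s - Maxwellian ρ θ u (s, ξ.2)) ξ.1)^2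
          / Maxwellian ρ θ u ξ)
        ≤ ∫ ξ in {ξ : ℝ × ℝ × ℝ | ξ.1 < 0}, A * (Real.exp (-((ξ.1-u)^2/(2*(2*θ))))
            * (Real.exp (-(ξ.2.1^2/(2*θ))) * Real.exp (-(ξ.2.2^2/(2*θ))))) := by
      refine integral_mono_of_nonneg ?_ ((G_integrable hθ).restrict) ?_
      · exact Filter.Eventually.of_forall fun ξ =>
          div_nonneg (sq_nonneg _) (maxwellian_pos hρ hθ ξ).le
      · refine (ae_restrict_mem hmeas).mono fun ξ hξ => ?_
        exact pointwise_bound hρ hθ hσ hu hψd hψ0 hψ1 hψb hC ξ hξ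
    have hGnn : 0 ≤ᵐ[volume] fun ξ : ℝ × ℝ × ℝ => A * (Real.exp (-((ξ.1-u)^2/(2*(2*θ))))
        * (Real.exp (-(ξ.2.1^2/(2*θ))) * Real.exp (-(ξ.2.2^2/(2*θ))))) :=
      Filter.Eventually.of_forall fun ξ => mul_nonneg hA0 (by positivity)
    have h2' := setIntegral_le_integral (s := {ξ : ℝ × ℝ × ℝ | ξ.1 < 0}) (G_integrable (A := A) (u := u) hθ) hGnn
    have h3 : (∫ ξ : ℝ × ℝ × ℝ, A * (Real.exp (-((ξ.1-u)^2/(2*(2*θ))))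
        * (Real.exp (-(ξ.2.1^2/(2*θ))) * Real.exp (-(ξ.2.2^2/(2*θ))))))
        = Real.sqrt 2 * ρ * ((C + (-u)/θ)^2 * Real.exp (-((-r-σ-u)^2/(2*(2*θ))))) := by
      rw [G_integral hθ, hA]
      calc ρ * (2*π*θ) ^ (-(3:ℝ)/2) * (C + (-u)/θ)^2 * Real.exp (-((-r-σ-u)^2/(2*(2*θ))))
            * (Real.sqrt (2*π*(2*θ)) * (Real.sqrt (2*π*θ) * Real.sqrt (2*π*θ)))
          = ((2*π*θ) ^ (-(3:ℝ)/2) * (Real.sqrt (2*π*(2*θ)) * (Real.sqrt (2*π*θ) * Real.sqrt (2*π*θ))))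
            * (ρ * ((C + (-u)/θ)^2 * Real.exp (-((-r-σ-u)^2/(2*(2*θ)))))) := by ring
        _ = _ := by rw [sqrt_simp hθ]; ring
    calc _ ≤ _ := h1
      _ ≤ _ := h2'
      _ = _ := h3

/-- for fixed `u∞ < −(r+2σ)`, for each `θ∞ > 0` there is a unique
`ρ∞(θ∞) > 0` with `∫ M∞ψ = 1`; for this choice, `ρ∞(θ∞) → 1` and `μ∞(θ∞) → 0` as
`θ∞ → 0⁺`. -/
theorem quasineutral_normalization_small_temperature
    (r σ u : ℝ) (hr : 0 < r) (hσ : 0 < σ) (hu : u < -(r + 2*σ))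
    (ψ : ℝ → ℝ) (hψ : ContDiff ℝ (⊤ : ℕ∞) ψ) (hψ0 : ∀ s, 0 ≤ ψ s) (hψ1 : ∀ s, ψ s ≤ 1)
    (hψa : ∀ s, -r ≤ s → ψ s = 0) (hψb : ∀ s, s ≤ -r - σ → ψ s = 1) :
    (∀ θ > (0:ℝ), ∃! ρ : ℝ, 0 < ρ ∧
      (∫ ξ : ℝ × ℝ × ℝ, Maxwellian ρ θ u ξ * ψ ξ.1) = 1) ∧
    ∀ ρfun : ℝ → ℝ,
      (∀ θ > (0:ℝ), 0 < ρfun θ ∧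
        (∫ ξ : ℝ × ℝ × ℝ, Maxwellian (ρfun θ) θ u ξ * ψ ξ.1) = 1) →
      Tendsto ρfun (nhdsWithin 0 (Set.Ioi 0)) (nhds 1) ∧
      Tendsto (fun θ => muInf (ρfun θ) θ u ψ) (nhdsWithin 0 (Set.Ioi 0)) (nhds 0) := by
  have hδ : (0:ℝ) < -r-σ-u := by linarith
  have hψm : Continuous ψ := hψ.continuous
  have hψd : Differentiable ℝ ψ := hψ.differentiable (by simp)
  obtain ⟨C, hC⟩ := (isCompact_Icc (a := -r-σ) (b := 0)).exists_bound_of_continuousOn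
    ((hψ.continuous_deriv (by simp)).continuousOn)
  have hC' : ∀ x ∈ Set.Icc (-r-σ) 0, |deriv ψ x| ≤ C := fun x hx => by
    simpa [Real.norm_eq_abs] using hC x hx
  constructor
  · intro θ hθ
    have hJ := J1_pos (u := u) hθ hσ ψ hψm hψ0 hψ1 hψb
    refine ⟨(∫ s : ℝ, (2*π*θ) ^ (-(1:ℝ)/2) * Real.exp (-((s-u)^2/(2*θ))) * ψ s)⁻¹,
      ⟨inv_pos.mpr hJ, ?_⟩, ?_⟩
    · rw [max_integral hθ ψ]
      exact inv_mul_cancel₀ (ne_of_gt hJ)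
    · rintro ρ' ⟨hρ'pos, hρ'eq⟩
      rw [max_integral hθ ψ] at hρ'eq
      exact eq_inv_of_mul_eq_one_left hρ'eq
  · intro ρfun hρfun
    have hEq : ∀ θ > (0:ℝ), ρfun θ
        * (∫ s : ℝ, (2*π*θ) ^ (-(1:ℝ)/2) * Real.exp (-((s-u)^2/(2*θ))) * ψ s) = 1 := by
      intro θ hθ
      have := (hρfun θ hθ).2
      rwa [max_integral hθ ψ] at this
    have hJt := J1_tendsto hδ ψ hψm hψ0 hψ1 hψb
    have hρt : Tendsto ρfun (nhdsWithin 0 (Set.Ioi 0)) (nhds 1) := by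
      have h := hJt.inv₀ one_ne_zero
      rw [inv_one] at h
      refine h.congr' ?_
      filter_upwards [self_mem_nhdsWithin] with θ hθ
      exact (eq_inv_of_mul_eq_one_left (hEq θ hθ)).symm
    refine ⟨hρt, ?_⟩
    have hc : (0:ℝ) < (-r-σ-u)^2/4 := by positivity
    have hW : Tendsto (fun θ : ℝ => (C + (-u)/θ)^2 * Real.exp (-((-r-σ-u)^2/(2*(2*θ)))))
        (nhdsWithin 0 (Set.Ioi 0)) (nhds 0) := by
      have t0 := (tendsto_pow_inv_exp 0 hc).const_mul (C^2)
      have t1 := (tendsto_pow_inv_exp 1 hc).const_mul (2*C*(-u))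
      have t2 := (tendsto_pow_inv_exp 2 hc).const_mul ((-u)^2)
      have hsum := (t0.add t1).add t2
      simp only [mul_zero, add_zero] at hsum
      refine hsum.congr fun θ => ?_
      have harg : ((-r-σ-u)^2/4)/θ = (-r-σ-u)^2/(2*(2*θ)) := by ring
      rw [harg]
      rw [div_eq_mul_inv]
      ring
    have hBt : Tendsto (fun θ : ℝ => Real.sqrt 2 * ρfun θ
        * ((C + (-u)/θ)^2 * Real.exp (-((-r-σ-u)^2/(2*(2*θ))))))
        (nhdsWithin 0 (Set.Ioi 0)) (nhds 0) := by
      have := ((tendsto_const_nhds (x := Real.sqrt 2)).mul hρt).mul hW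
      simpa using this
    have hItend : Tendsto (fun θ : ℝ => ∫ ξ in {ξ : ℝ × ℝ × ℝ | ξ.1 < 0},
        (deriv (fun s => Maxwellian (ρfun θ) θ u (s, ξ.2) * ψ s
          - Maxwellian (ρfun θ) θ u (s, ξ.2)) ξ.1)^2 / Maxwellian (ρfun θ) θ u ξ)
        (nhdsWithin 0 (Set.Ioi 0)) (nhds 0) := by
      apply squeeze_zero'
      · filter_upwards [self_mem_nhdsWithin] with θ hθ
        exact (Isq_bound (hρfun θ hθ).1 hθ hσ hu hψd hψ0 hψ1 hψb hC').1
      · filter_upwards [self_mem_nhdsWithin] with θ hθ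
        exact (Isq_bound (hρfun θ hθ).1 hθ hσ hu hψd hψ0 hψ1 hψb hC').2
      · exact hBt
    have hsqrt := (Real.continuous_sqrt.tendsto 0).comp hItend
    rw [Real.sqrt_zero] at hsqrt
    exact hsqrt.congr fun θ => rfl
end
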